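/- Let r ≥ 1 and let E_1, …, E_r be finite-dimensional complex vector spaces such that each E_i = F_i ⊕ L_i with dim_ℂ L_i = 1, with V, V*, V_F, V_F*, V_L, V_L*, block-diagonal embeddings ε, ᵗε, and groups H = ∏ GL(E_i), H_F = ∏ GL(F_i) acting as usual. For an H-orbit C of V set Λ_C = {(x, y) ∈ C × V* : commuting}, and for an H-orbit B of V* set Λ'_B = {(x, y) ∈ V × B : commuting}; make the analogous definitions inside V_F × V_F*. Let C_F be an H_F-orbit of V_F and B_F an H_F-orbit of V_F* such that Zcl(Λ_{C_F}) = Zcl(Λ'_{B_F}) inside V_F × V_F* (i.e., B_F is the dual orbit of C_F). Fix x_F ∈ C_F, y'_F ∈ B_F, and y_L ∈ V_L* with all components nonzero. Let C be the H-orbit of ε(x_F, 0) in V and B the H-orbit of ᵗε(y'_F, y_L) in V*. Then Zcl(Λ_C) = Zcl(Λ'_B) inside V × V*, i.e., B is the dual orbit of C. -/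

import Mathlib

open LinearMap

/-- The Vogan variety `V = ∏_{i=1}^{r-1} Hom_ℂ(E_i, E_{i+1})` attached to a family of
complex vector spaces `E_1, …, E_r` (indexed here by `Fin (n+1)`, so `r = n + 1 ≥ 1`). -/
abbrev Vog (n : ℕ) (E : Fin (n + 1) → Type) [∀ i, AddCommGroup (E i)]
    [∀ i, Module ℂ (E i)] : Type :=
  ∀ i : Fin n, E i.castSucc →ₗ[ℂ] E i.succ

/-- The dual Vogan variety `V* = ∏_{i=1}^{r-1} Hom_ℂ(E_{i+1}, E_i)`. -/
abbrev VogD (n : ℕ) (E : Fin (n + 1) → Type) [∀ i, AddCommGroup (E i)]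
    [∀ i, Module ℂ (E i)] : Type :=
  ∀ i : Fin n, E i.succ →ₗ[ℂ] E i.castSucc

variable {n : ℕ}

section defs
variable {E : Fin (n + 1) → Type} [∀ i, AddCommGroup (E i)] [∀ i, Module ℂ (E i)]

/-- The action of `H = ∏_{i=1}^r GL(E_i)` on `V`: `(h·x)_i = h_{i+1} ∘ x_i ∘ h_i⁻¹`. -/
def Vact (h : ∀ i, E i ≃ₗ[ℂ] E i) (x : Vog n E) : Vog n E :=
  fun i => (h i.succ).toLinearMap ∘ₗ x i ∘ₗ (h i.castSucc).symm.toLinearMap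

/-- The action of `H` on `V*`: `(h·y)_i = h_i ∘ y_i ∘ h_{i+1}⁻¹`. -/
def VactD (h : ∀ i, E i ≃ₗ[ℂ] E i) (y : VogD n E) : VogD n E :=
  fun i => (h i.castSucc).toLinearMap ∘ₗ y i ∘ₗ (h i.succ).symm.toLinearMap

/-- `C ⊆ V` is an `H`-orbit. -/
def IsOrbit (C : Set (Vog n E)) : Prop :=
  ∃ x₀ : Vog n E, C = {x | ∃ h : ∀ i, E i ≃ₗ[ℂ] E i, x = Vact h x₀}

/-- The commuting (conormal) condition `[x, y] = 0`, expressed blockwise: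
`x_{i-1} ∘ y_{i-1} = y_i ∘ x_i` on `E_i` for `i = 1, …, r`, with the boundary
conventions `x_0 = y_0 = x_r = y_r = 0`. -/
def IsConormal (x : Vog n E) (y : VogD n E) : Prop :=
  ∀ j : Fin (n + 1),
    Fin.cases (motive := fun j => E j →ₗ[ℂ] E j) 0 (fun i => x i ∘ₗ y i) j
      = Fin.lastCases (motive := fun j => E j →ₗ[ℂ] E j) 0 (fun i => y i ∘ₗ x i) j

/-- The conormal variety `Λ_C = {(x, y) ∈ C × V* : [x,y] = 0}` over a subset `C ⊆ V`. -/
def Lam (C : Set (Vog n E)) : Set (Vog n E × VogD n E) :=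
  {p | p.1 ∈ C ∧ IsConormal p.1 p.2}

end defs

section prodDefs
variable {F G : Fin (n + 1) → Type}
  [∀ i, AddCommGroup (F i)] [∀ i, Module ℂ (F i)]
  [∀ i, AddCommGroup (G i)] [∀ i, Module ℂ (G i)]

/-- The block-diagonal embedding `ε : V_F × V_G → V`. -/
def eps (u : Vog n F × Vog n G) : Vog n (fun i => F i × G i) :=
  fun i => (u.1 i).prodMap (u.2 i)

/-- The block-diagonal embedding `ᵗε : V_F* × V_G* → V*`. -/
def epsD (w : VogD n F × VogD n G) : VogD n (fun i => F i × G i) :=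
  fun i => (w.1 i).prodMap (w.2 i)

/-- `C' ⊆ V_F × V_G` is an `(H_F × H_G)`-orbit. -/
def IsOrbit2 (C' : Set (Vog n F × Vog n G)) : Prop :=
  ∃ u₀ : Vog n F × Vog n G,
    C' = {u | ∃ (hF : ∀ i, F i ≃ₗ[ℂ] F i) (hG : ∀ i, G i ≃ₗ[ℂ] G i),
      u = (Vact hF u₀.1, Vact hG u₀.2)}

section dualdefs
variable {E : Fin (n + 1) → Type} [∀ i, AddCommGroup (E i)] [∀ i, Module ℂ (E i)]

/-- `B ⊆ V*` is an `H`-orbit. -/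
def IsOrbitD (B : Set (VogD n E)) : Prop :=
  ∃ y₀ : VogD n E, B = {y | ∃ h : ∀ i, E i ≃ₗ[ℂ] E i, y = VactD h y₀}

/-- The conormal variety `Λ'_B = {(x, y) ∈ V × B : [x, y] = 0}` over a subset `B ⊆ V*`. -/
def LamD (B : Set (VogD n E)) : Set (Vog n E × VogD n E) :=
  {p | p.2 ∈ B ∧ IsConormal p.1 p.2}

end dualdefs

/-- The Zariski closure of a subset `S` of a complex vector space `M`: the zero locus of
the set of all polynomial functions on `M` (the subalgebra of `M → ℂ` generated by the
linear functionals) vanishing on `S`. -/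
def Zcl {M : Type} [AddCommGroup M] [Module ℂ M] (S : Set M) : Set M :=
  {x | ∀ p : M → ℂ,
    p ∈ Algebra.adjoin ℂ (Set.range fun l : M →ₗ[ℂ] ℂ => (l : M → ℂ)) →
    (∀ s ∈ S, p s = 0) → p x = 0}

/-! ### Auxiliary infrastructure -/

open scoped Classical

section ZclLemmas

variable {M N : Type} [AddCommGroup M] [Module ℂ M] [AddCommGroup N] [Module ℂ N]

theorem subset_Zcl (S : Set M) : S ⊆ Zcl S := by
  intro s hs p _ hvan
  exact hvan s hs

theorem Zcl_min {S T : Set M} (h : S ⊆ Zcl T) : Zcl S ⊆ Zcl T := by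
  intro z hz p hp hvan
  exact hz p hp (fun s hs => h hs p hp hvan)

/-- An affine map sends the Zariski closure of `S` into the Zariski closure of any set
`T` such that `Φ(S) ⊆ Zcl T`. -/
theorem Zcl_map (Φ : M → N) (T0 : M →ₗ[ℂ] N) (c : N) (hΦ : ∀ m, Φ m = T0 m + c)
    {S : Set M} {T : Set N} (h : ∀ m ∈ S, Φ m ∈ Zcl T) :
    ∀ m ∈ Zcl S, Φ m ∈ Zcl T := by
  have hcomp : ∀ p : N → ℂ, p ∈ Algebra.adjoin ℂ (Set.range fun l : N →ₗ[ℂ] ℂ => (l : N → ℂ)) →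
      (fun m => p (Φ m)) ∈
      Algebra.adjoin ℂ (Set.range fun l : M →ₗ[ℂ] ℂ => (l : M → ℂ)) := by
    intro p hp
    induction hp using Algebra.adjoin_induction with
    | mem q hq =>
      obtain ⟨l, rfl⟩ := hq
      have : (fun m => (l : N → ℂ) (Φ m)) =
          (fun m => ((l.comp T0 : M →ₗ[ℂ] ℂ) : M → ℂ) m) + (fun _ => l c) := by
        funext m
        simp [hΦ m, Pi.add_apply]
      rw [this]
      exact Subalgebra.add_mem _
        (Algebra.subset_adjoin ⟨l.comp T0, rfl⟩)
        (Subalgebra.algebraMap_mem _ (l c))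
    | algebraMap r => exact Subalgebra.algebraMap_mem _ r
    | add q r _ _ hq hr => exact Subalgebra.add_mem _ hq hr
    | mul q r _ _ hq hr => exact Subalgebra.mul_mem _ hq hr
  intro m hm p hp hvan
  exact hm _ (hcomp p hp) (fun s hs => h s hs p hp hvan)

/-- Curve lemma: if the affine line `t ↦ m + t • v` lies in `Zcl T` for infinitely many
`t`, then its value at `t = 0` lies in `Zcl T`. -/
theorem Zcl_curve {T : Set M} (m v : M) {S : Set ℂ} (hS : S.Infinite)
    (h : ∀ t ∈ S, m + t • v ∈ Zcl T) : m ∈ Zcl T := by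
  have key : ∀ p : M → ℂ, p ∈ Algebra.adjoin ℂ (Set.range fun l : M →ₗ[ℂ] ℂ => (l : M → ℂ)) →
      ∃ q : Polynomial ℂ, ∀ t : ℂ, p (m + t • v) = q.eval t := by
    intro p hp
    induction hp using Algebra.adjoin_induction with
    | mem q hq =>
      obtain ⟨l, rfl⟩ := hq
      refine ⟨Polynomial.C (l m) + Polynomial.C (l v) * Polynomial.X, fun t => ?_⟩
      simp only [map_add, map_smul, smul_eq_mul, Polynomial.eval_add, Polynomial.eval_C,
        Polynomial.eval_mul, Polynomial.eval_X]
      ring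
    | algebraMap r => exact ⟨Polynomial.C r, fun t => by simp⟩
    | add q r _ _ hq hr =>
      obtain ⟨q1, hq1⟩ := hq; obtain ⟨q2, hq2⟩ := hr
      exact ⟨q1 + q2, fun t => by simp [Pi.add_apply, hq1 t, hq2 t]⟩
    | mul q r _ _ hq hr =>
      obtain ⟨q1, hq1⟩ := hq; obtain ⟨q2, hq2⟩ := hr
      exact ⟨q1 * q2, fun t => by simp [Pi.mul_apply, hq1 t, hq2 t]⟩
  intro p hp hvan
  obtain ⟨q, hq⟩ := key p hp
  have hq0 : q = 0 := by
    apply Polynomial.eq_zero_of_infinite_isRoot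
    apply Set.Infinite.mono _ hS
    intro t ht
    have := h t ht p hp hvan
    simpa [Polynomial.IsRoot, ← hq t] using this
  have : p (m + (0 : ℂ) • v) = q.eval 0 := hq 0
  simpa [hq0] using this

end ZclLemmas

section OneDim

variable {M N : Type} [AddCommGroup M] [Module ℂ M] [AddCommGroup N] [Module ℂ N]

/-- A nonzero linear map between 1-dimensional spaces is bijective. -/
theorem oneDim_bijective (f : M →ₗ[ℂ] N) (hf : f ≠ 0)
    (hM : Module.finrank ℂ M = 1) (hN : Module.finrank ℂ N = 1) :
    Function.Bijective f := by
  have hex : ∃ m : M, f m ≠ 0 := by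
    by_contra hc
    push_neg at hc
    exact hf (LinearMap.ext fun m => by simp [hc m])
  obtain ⟨m₀, hm₀⟩ := hex
  have hm₀0 : m₀ ≠ 0 := fun h => hm₀ (by simp [h])
  have hMspan : ∀ w : M, ∃ c : ℂ, c • m₀ = w :=
    (finrank_eq_one_iff_of_nonzero' m₀ hm₀0).mp hM
  have hNspan : ∀ w : N, ∃ c : ℂ, c • f m₀ = w :=
    (finrank_eq_one_iff_of_nonzero' (f m₀) hm₀).mp hN
  constructor
  · intro x y hxy
    obtain ⟨cx, hx⟩ := hMspan x
    obtain ⟨cy, hy⟩ := hMspan y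
    rw [← hx, ← hy] at hxy ⊢
    rw [map_smul, map_smul] at hxy
    have hsub : (cx - cy) • f m₀ = 0 := by rw [sub_smul, hxy, sub_self]
    rcases smul_eq_zero.mp hsub with hcc | hc
    · rw [sub_eq_zero.mp hcc]
    · exact absurd hc hm₀
  · intro y
    obtain ⟨c, hc⟩ := hNspan y
    exact ⟨c • m₀, by rw [map_smul, hc]⟩

/-- The linear equivalence underlying a nonzero map between 1-dimensional spaces. -/
noncomputable def oneDimEquiv (f : M →ₗ[ℂ] N) (hf : f ≠ 0)
    (hM : Module.finrank ℂ M = 1) (hN : Module.finrank ℂ N = 1) : M ≃ₗ[ℂ] N :=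
  LinearEquiv.ofBijective f (oneDim_bijective f hf hM hN)

@[simp] theorem oneDimEquiv_apply (f : M →ₗ[ℂ] N) (hf : f ≠ 0)
    (hM : Module.finrank ℂ M = 1) (hN : Module.finrank ℂ N = 1) (m : M) :
    oneDimEquiv f hf hM hN m = f m := rfl

end OneDim
/-! ### Action and conormality lemmas -/

section ActionLemmas

variable {E : Fin (n + 1) → Type} [∀ i, AddCommGroup (E i)] [∀ i, Module ℂ (E i)]

theorem Vact_Vact (h h' : ∀ i, E i ≃ₗ[ℂ] E i) (x : Vog n E) :
    Vact h (Vact h' x) = Vact (fun i => (h' i).trans (h i)) x := by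
  funext i
  apply LinearMap.ext
  intro v
  simp [Vact]

theorem VactD_VactD (h h' : ∀ i, E i ≃ₗ[ℂ] E i) (y : VogD n E) :
    VactD h (VactD h' y) = VactD (fun i => (h' i).trans (h i)) y := by
  funext i
  apply LinearMap.ext
  intro v
  simp [VactD]

theorem Vact_refl (x : Vog n E) :
    Vact (fun i => LinearEquiv.refl ℂ (E i)) x = x := by
  funext i
  apply LinearMap.ext
  intro v
  simp [Vact]

theorem VactD_refl (y : VogD n E) :
    VactD (fun i => LinearEquiv.refl ℂ (E i)) y = y := by
  funext i
  apply LinearMap.ext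
  intro v
  simp [VactD]

theorem Vact_symm_cancel (h : ∀ i, E i ≃ₗ[ℂ] E i) (x : Vog n E) :
    Vact h (Vact (fun i => (h i).symm) x) = x := by
  rw [Vact_Vact]
  have : (fun i => ((h i).symm.trans (h i))) = fun i => LinearEquiv.refl ℂ (E i) := by
    funext i; ext v; simp
  rw [this, Vact_refl]

theorem VactD_symm_cancel (h : ∀ i, E i ≃ₗ[ℂ] E i) (y : VogD n E) :
    VactD h (VactD (fun i => (h i).symm) y) = y := by
  rw [VactD_VactD]
  have : (fun i => ((h i).symm.trans (h i))) = fun i => LinearEquiv.refl ℂ (E i) := by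
    funext i; ext v; simp
  rw [this, VactD_refl]

/-- Conjugation preserves the conormality condition. -/
theorem IsConormal.conj {x : Vog n E} {y : VogD n E}
    (hc : IsConormal x y) (h : ∀ i, E i ≃ₗ[ℂ] E i) :
    IsConormal (Vact h x) (VactD h y) := by
  intro j
  have hL : ∀ j : Fin (n + 1),
      Fin.cases (motive := fun j => E j →ₗ[ℂ] E j) 0
        (fun i => Vact h x i ∘ₗ VactD h y i) j
      = (h j).toLinearMap ∘ₗ
        (Fin.cases (motive := fun j => E j →ₗ[ℂ] E j) 0 (fun i => x i ∘ₗ y i) j)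
        ∘ₗ (h j).symm.toLinearMap := by
    intro j
    induction j using Fin.cases with
    | zero => apply LinearMap.ext; intro v; simp
    | succ i => apply LinearMap.ext; intro v; simp [Vact, VactD]
  have hR : ∀ j : Fin (n + 1),
      Fin.lastCases (motive := fun j => E j →ₗ[ℂ] E j) 0
        (fun i => VactD h y i ∘ₗ Vact h x i) j
      = (h j).toLinearMap ∘ₗ
        (Fin.lastCases (motive := fun j => E j →ₗ[ℂ] E j) 0 (fun i => y i ∘ₗ x i) j)
        ∘ₗ (h j).symm.toLinearMap := by
    intro j
    induction j using Fin.lastCases with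
    | last => apply LinearMap.ext; intro v; simp
    | cast i => apply LinearMap.ext; intro v; simp [Vact, VactD]
  rw [hL j, hR j, hc j]

theorem isConormal_conj_iff {x : Vog n E} {y : VogD n E} (h : ∀ i, E i ≃ₗ[ℂ] E i) :
    IsConormal (Vact h x) (VactD h y) ↔ IsConormal x y := by
  constructor
  · intro hc
    have := hc.conj (fun i => (h i).symm)
    rwa [Vact_Vact, VactD_VactD,
      show (fun i => ((h i).trans (h i).symm)) = fun i => LinearEquiv.refl ℂ (E i) by
        funext i; ext v; simp,
      Vact_refl, VactD_refl] at this
  · intro hc; exact hc.conj h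

end ActionLemmas

section ProdLemmas

variable {F L : Fin (n + 1) → Type}
  [∀ i, AddCommGroup (F i)] [∀ i, Module ℂ (F i)]
  [∀ i, AddCommGroup (L i)] [∀ i, Module ℂ (L i)]

theorem IsConormal.prodMk {xF : Vog n F} {yF : VogD n F} {xL : Vog n L} {yL : VogD n L}
    (h1 : IsConormal xF yF) (h2 : IsConormal xL yL) :
    IsConormal (E := fun i => F i × L i) (eps (xF, xL)) (epsD (yF, yL)) := by
  intro j
  have hL : ∀ j : Fin (n + 1),
      Fin.cases (motive := fun j => (F j × L j) →ₗ[ℂ] (F j × L j)) 0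
        (fun i => eps (xF, xL) i ∘ₗ epsD (yF, yL) i) j
      = LinearMap.prodMap
          (Fin.cases (motive := fun j => F j →ₗ[ℂ] F j) 0 (fun i => xF i ∘ₗ yF i) j)
          (Fin.cases (motive := fun j => L j →ₗ[ℂ] L j) 0 (fun i => xL i ∘ₗ yL i) j) := by
    intro j
    induction j using Fin.cases with
    | zero => apply LinearMap.ext; intro v; simp
    | succ i => apply LinearMap.ext; intro v; simp [eps, epsD]
  have hR : ∀ j : Fin (n + 1),
      Fin.lastCases (motive := fun j => (F j × L j) →ₗ[ℂ] (F j × L j)) 0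
        (fun i => epsD (yF, yL) i ∘ₗ eps (xF, xL) i) j
      = LinearMap.prodMap
          (Fin.lastCases (motive := fun j => F j →ₗ[ℂ] F j) 0 (fun i => yF i ∘ₗ xF i) j)
          (Fin.lastCases (motive := fun j => L j →ₗ[ℂ] L j) 0 (fun i => yL i ∘ₗ xL i) j) := by
    intro j
    induction j using Fin.lastCases with
    | last => apply LinearMap.ext; intro v; simp
    | cast i => apply LinearMap.ext; intro v; simp [eps, epsD]
  rw [hL j, hR j, h1 j, h2 j]

theorem isConormal_zero_left (yL : VogD n L) : IsConormal (0 : Vog n L) yL := by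
  intro j
  have hL : Fin.cases (motive := fun j => L j →ₗ[ℂ] L j) 0
      (fun i => (0 : Vog n L) i ∘ₗ yL i) j = 0 := by
    induction j using Fin.cases with
    | zero => rfl
    | succ i => apply LinearMap.ext; intro v; simp
  have hR : Fin.lastCases (motive := fun j => L j →ₗ[ℂ] L j) 0
      (fun i => yL i ∘ₗ (0 : Vog n L) i) j = 0 := by
    induction j using Fin.lastCases with
    | last => simp
    | cast i => apply LinearMap.ext; intro v; simp
  rw [hL, hR]

/-- Product of tuples of equivalences. -/
def prodTup (hF : ∀ i, F i ≃ₗ[ℂ] F i) (hL : ∀ i, L i ≃ₗ[ℂ] L i) :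
    ∀ i, (F i × L i) ≃ₗ[ℂ] (F i × L i) :=
  fun i => (hF i).prodCongr (hL i)

theorem Vact_prodTup (hF : ∀ i, F i ≃ₗ[ℂ] F i) (hL : ∀ i, L i ≃ₗ[ℂ] L i)
    (u : Vog n F) (v : Vog n L) :
    Vact (prodTup hF hL) (eps (u, v)) = eps (Vact hF u, Vact hL v) := by
  funext i
  apply LinearMap.ext
  rintro ⟨f, l⟩
  simp [Vact, prodTup, eps, LinearEquiv.prodCongr_symm, LinearEquiv.prodCongr_apply]

theorem VactD_prodTup (hF : ∀ i, F i ≃ₗ[ℂ] F i) (hL : ∀ i, L i ≃ₗ[ℂ] L i)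
    (u : VogD n F) (v : VogD n L) :
    VactD (prodTup hF hL) (epsD (u, v)) = epsD (VactD hF u, VactD hL v) := by
  funext i
  apply LinearMap.ext
  rintro ⟨f, l⟩
  simp [VactD, prodTup, epsD, LinearEquiv.prodCongr_symm, LinearEquiv.prodCongr_apply]

end ProdLemmas
/-! ### Block algebra for `E i = F i × L i` -/

section Blocks

variable {F L : Fin (n + 1) → Type}
  [∀ i, AddCommGroup (F i)] [∀ i, Module ℂ (F i)]
  [∀ i, AddCommGroup (L i)] [∀ i, Module ℂ (L i)]

/-- Build an element of `VogD n (F × L)` from four blocks. -/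
def mk4 (a : VogD n F) (b : ∀ i : Fin n, L i.succ →ₗ[ℂ] F i.castSucc)
    (c : ∀ i : Fin n, F i.succ →ₗ[ℂ] L i.castSucc) (d : VogD n L) :
    VogD n (fun i => F i × L i) :=
  fun i => LinearMap.prod ((a i).coprod (b i)) ((c i).coprod (d i))

@[simp] theorem mk4_apply (a : VogD n F) (b : ∀ i : Fin n, L i.succ →ₗ[ℂ] F i.castSucc)
    (c : ∀ i : Fin n, F i.succ →ₗ[ℂ] L i.castSucc) (d : VogD n L) (i : Fin n)
    (f : F i.succ) (l : L i.succ) :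
    mk4 a b c d i (f, l) = (a i f + b i l, c i f + d i l) := rfl

theorem epsD_eq_mk4 (w : VogD n F) (δ : VogD n L) :
    epsD (w, δ) = mk4 w 0 0 δ := by
  funext i
  apply LinearMap.ext
  rintro ⟨f, l⟩
  simp [epsD]

/-- The four blocks of an element of `VogD n (F × L)`. -/
def blkA (y : VogD n (fun i => F i × L i)) : VogD n F :=
  fun i => (LinearMap.fst ℂ _ _) ∘ₗ y i ∘ₗ (LinearMap.inl ℂ _ _)

def blkB (y : VogD n (fun i => F i × L i)) :
    ∀ i : Fin n, L i.succ →ₗ[ℂ] F i.castSucc :=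
  fun i => (LinearMap.fst ℂ _ _) ∘ₗ y i ∘ₗ (LinearMap.inr ℂ _ _)

def blkC (y : VogD n (fun i => F i × L i)) :
    ∀ i : Fin n, F i.succ →ₗ[ℂ] L i.castSucc :=
  fun i => (LinearMap.snd ℂ _ _) ∘ₗ y i ∘ₗ (LinearMap.inl ℂ _ _)

def blkD (y : VogD n (fun i => F i × L i)) : VogD n L :=
  fun i => (LinearMap.snd ℂ _ _) ∘ₗ y i ∘ₗ (LinearMap.inr ℂ _ _)

theorem mk4_blocks (y : VogD n (fun i => F i × L i)) :
    mk4 (blkA y) (blkB y) (blkC y) (blkD y) = y := by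
  funext i
  apply LinearMap.ext
  rintro ⟨f, l⟩
  have : ((f, l) : F i.succ × L i.succ) = (f, 0) + (0, l) := by simp
  rw [mk4_apply, this, map_add]
  simp [blkA, blkB, blkC, blkD, Prod.ext_iff]

/-- mk4 splitting of the `d`-block. -/
theorem mk4_d_add (a : VogD n F) (b : ∀ i : Fin n, L i.succ →ₗ[ℂ] F i.castSucc)
    (c : ∀ i : Fin n, F i.succ →ₗ[ℂ] L i.castSucc) (d d' : VogD n L) (σ : ℂ) :
    mk4 a b c (fun i => d i + σ • d' i) = mk4 a b c d + σ • mk4 0 0 0 d' := by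
  funext i
  apply LinearMap.ext
  rintro ⟨f, l⟩
  simp only [mk4, LinearMap.prod_apply, LinearMap.coprod_apply, Pi.add_apply,
    LinearMap.add_apply, Pi.smul_apply, LinearMap.smul_apply, Function.prod_apply,
    LinearMap.zero_apply, Pi.zero_apply, smul_zero, add_zero, zero_add, map_add, map_smul,
    Prod.mk_add_mk, Prod.smul_mk, Prod.ext_iff]
  exact ⟨trivial, by abel⟩

/-- Upper-triangular unipotent equivalence `(f, l) ↦ (f + β l, l)`. -/
def uequiv {M N : Type} [AddCommGroup M] [Module ℂ M] [AddCommGroup N] [Module ℂ N]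
    (β : N →ₗ[ℂ] M) : (M × N) ≃ₗ[ℂ] (M × N) :=
  LinearEquiv.ofLinear
    (LinearMap.prod ((LinearMap.fst ℂ M N) + β ∘ₗ (LinearMap.snd ℂ M N)) (LinearMap.snd ℂ M N))
    (LinearMap.prod ((LinearMap.fst ℂ M N) - β ∘ₗ (LinearMap.snd ℂ M N)) (LinearMap.snd ℂ M N))
    (by apply LinearMap.ext; rintro ⟨m, l⟩; simp)
    (by apply LinearMap.ext; rintro ⟨m, l⟩; simp)

@[simp] theorem uequiv_apply {M N : Type} [AddCommGroup M] [Module ℂ M] [AddCommGroup N]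
    [Module ℂ N] (β : N →ₗ[ℂ] M) (m : M) (l : N) :
    uequiv β (m, l) = (m + β l, l) := rfl

/-- Lower-triangular unipotent equivalence `(f, l) ↦ (f, γ f + l)`. -/
def lequiv {M N : Type} [AddCommGroup M] [Module ℂ M] [AddCommGroup N] [Module ℂ N]
    (γ : M →ₗ[ℂ] N) : (M × N) ≃ₗ[ℂ] (M × N) :=
  LinearEquiv.ofLinear
    (LinearMap.prod (LinearMap.fst ℂ M N) (γ ∘ₗ (LinearMap.fst ℂ M N) + LinearMap.snd ℂ M N))
    (LinearMap.prod (LinearMap.fst ℂ M N) ((LinearMap.snd ℂ M N) - γ ∘ₗ (LinearMap.fst ℂ M N)))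
    (by apply LinearMap.ext; rintro ⟨m, l⟩; simp)
    (by apply LinearMap.ext; rintro ⟨m, l⟩; simp)

@[simp] theorem lequiv_apply {M N : Type} [AddCommGroup M] [Module ℂ M] [AddCommGroup N]
    [Module ℂ N] (γ : M →ₗ[ℂ] N) (m : M) (l : N) :
    lequiv γ (m, l) = (m, γ m + l) := rfl

end Blocks

section EqOf

variable {E : Fin (n + 1) → Type} [∀ i, AddCommGroup (E i)] [∀ i, Module ℂ (E i)]

theorem Vact_eq_of (g : ∀ i, E i ≃ₗ[ℂ] E i) (X X' : Vog n E)
    (h : ∀ (i : Fin n) (u : E i.castSucc), g i.succ (X i u) = X' i (g i.castSucc u)) :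
    Vact g X = X' := by
  funext i
  apply LinearMap.ext
  intro v
  have := h i ((g i.castSucc).symm v)
  simp only [LinearEquiv.apply_symm_apply] at this
  simpa [Vact] using this

theorem VactD_eq_of (g : ∀ i, E i ≃ₗ[ℂ] E i) (Y Y' : VogD n E)
    (h : ∀ (i : Fin n) (u : E i.succ), g i.castSucc (Y i u) = Y' i (g i.succ u)) :
    VactD g Y = Y' := by
  funext i
  apply LinearMap.ext
  intro v
  have := h i ((g i.succ).symm v)
  simp only [LinearEquiv.apply_symm_apply] at this
  simpa [VactD] using this

end EqOf
/-! ### Extraction of blocks from conormality with a block-diagonal partner -/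

section Extract

variable {F L : Fin (n + 1) → Type}
  [∀ i, AddCommGroup (F i)] [∀ i, Module ℂ (F i)]
  [∀ i, AddCommGroup (L i)] [∀ i, Module ℂ (L i)]

/-- FF-block of an endomorphism of `F j × L j`. -/
def ffb {j : Fin (n + 1)} (T : (F j × L j) →ₗ[ℂ] (F j × L j)) : F j →ₗ[ℂ] F j :=
  (LinearMap.fst ℂ _ _) ∘ₗ T ∘ₗ (LinearMap.inl ℂ _ _)

def flb {j : Fin (n + 1)} (T : (F j × L j) →ₗ[ℂ] (F j × L j)) : L j →ₗ[ℂ] F j :=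
  (LinearMap.fst ℂ _ _) ∘ₗ T ∘ₗ (LinearMap.inr ℂ _ _)

def lfb {j : Fin (n + 1)} (T : (F j × L j) →ₗ[ℂ] (F j × L j)) : F j →ₗ[ℂ] L j :=
  (LinearMap.snd ℂ _ _) ∘ₗ T ∘ₗ (LinearMap.inl ℂ _ _)

def llb {j : Fin (n + 1)} (T : (F j × L j) →ₗ[ℂ] (F j × L j)) : L j →ₗ[ℂ] L j :=
  (LinearMap.snd ℂ _ _) ∘ₗ T ∘ₗ (LinearMap.inr ℂ _ _)

/-- Blocks of an element of `Vog n (F × L)`. -/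
def blkP (x : Vog n (fun i => F i × L i)) : Vog n F :=
  fun i => (LinearMap.fst ℂ _ _) ∘ₗ x i ∘ₗ (LinearMap.inl ℂ _ _)

def blkQ (x : Vog n (fun i => F i × L i)) : ∀ i : Fin n, L i.castSucc →ₗ[ℂ] F i.succ :=
  fun i => (LinearMap.fst ℂ _ _) ∘ₗ x i ∘ₗ (LinearMap.inr ℂ _ _)

def blkS (x : Vog n (fun i => F i × L i)) : ∀ i : Fin n, F i.castSucc →ₗ[ℂ] L i.succ :=
  fun i => (LinearMap.snd ℂ _ _) ∘ₗ x i ∘ₗ (LinearMap.inl ℂ _ _)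

def blkT (x : Vog n (fun i => F i × L i)) : Vog n L :=
  fun i => (LinearMap.snd ℂ _ _) ∘ₗ x i ∘ₗ (LinearMap.inr ℂ _ _)

/-- Relations satisfied by the blocks of `y` conormal to `ε(x_F, 0)`. -/
theorem conormal_to_diagX (xF : Vog n F) (y : VogD n (fun i => F i × L i))
    (hc : IsConormal (E := fun i => F i × L i) (eps (xF, (0 : Vog n L))) y) :
    IsConormal xF (blkA y) ∧ (∀ i : Fin n, xF i ∘ₗ blkB y i = 0) ∧
      (∀ i : Fin n, blkC y i ∘ₗ xF i = 0) := by
  have hFF_L : ∀ j, ffb (Fin.cases (motive := fun j => (F j × L j) →ₗ[ℂ] (F j × L j)) 0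
      (fun i => eps (xF, (0 : Vog n L)) i ∘ₗ y i) j)
      = Fin.cases (motive := fun j => F j →ₗ[ℂ] F j) 0 (fun i => xF i ∘ₗ blkA y i) j := by
    intro j
    induction j using Fin.cases with
    | zero => apply LinearMap.ext; intro v; simp [ffb]
    | succ i => apply LinearMap.ext; intro v; simp [ffb, eps, blkA]
  have hFF_R : ∀ j, ffb (Fin.lastCases (motive := fun j => (F j × L j) →ₗ[ℂ] (F j × L j)) 0
      (fun i => y i ∘ₗ eps (xF, (0 : Vog n L)) i) j)
      = Fin.lastCases (motive := fun j => F j →ₗ[ℂ] F j) 0 (fun i => blkA y i ∘ₗ xF i) j := by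
    intro j
    induction j using Fin.lastCases with
    | last => apply LinearMap.ext; intro v; simp [ffb]
    | cast i => apply LinearMap.ext; intro v; simp [ffb, eps, blkA]
  have hFL_L : ∀ (i : Fin n), flb (Fin.cases (motive := fun j => (F j × L j) →ₗ[ℂ] (F j × L j)) 0
      (fun i => eps (xF, (0 : Vog n L)) i ∘ₗ y i) i.succ) = xF i ∘ₗ blkB y i := by
    intro i
    apply LinearMap.ext; intro v; simp [flb, eps, blkB]
  have hFL_R : ∀ j, flb (Fin.lastCases (motive := fun j => (F j × L j) →ₗ[ℂ] (F j × L j)) 0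
      (fun i => y i ∘ₗ eps (xF, (0 : Vog n L)) i) j) = 0 := by
    intro j
    induction j using Fin.lastCases with
    | last => apply LinearMap.ext; intro v; simp [flb]
    | cast i => apply LinearMap.ext; intro v; simp [flb, eps, Prod.mk_zero_zero]
  have hLF_L : ∀ j, lfb (Fin.cases (motive := fun j => (F j × L j) →ₗ[ℂ] (F j × L j)) 0
      (fun i => eps (xF, (0 : Vog n L)) i ∘ₗ y i) j) = 0 := by
    intro j
    induction j using Fin.cases with
    | zero => apply LinearMap.ext; intro v; simp [lfb]
    | succ i => apply LinearMap.ext; intro v; simp [lfb, eps]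
  have hLF_R : ∀ (i : Fin n), lfb (Fin.lastCases (motive := fun j => (F j × L j) →ₗ[ℂ] (F j × L j)) 0
      (fun i => y i ∘ₗ eps (xF, (0 : Vog n L)) i) i.castSucc) = blkC y i ∘ₗ xF i := by
    intro i
    apply LinearMap.ext; intro v; simp [lfb, eps, blkC]
  refine ⟨fun j => ?_, fun i => ?_, fun i => ?_⟩
  · rw [← hFF_L j, hc j, hFF_R j]
  · rw [← hFL_L i, hc i.succ, hFL_R]
  · rw [← hLF_R i, ← hc i.castSucc, hLF_L]

/-- Blocks of `x` conormal to `ᵗε(y_F', y_L)`: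
the four blockwise chain conditions. -/
theorem conormal_to_diagY (x : Vog n (fun i => F i × L i)) (yF : VogD n F) (yL : VogD n L)
    (hc : IsConormal (E := fun i => F i × L i) x (epsD (yF, yL))) :
    IsConormal (blkP x) yF ∧
    (∀ j : Fin (n + 1),
      Fin.cases (motive := fun j => L j →ₗ[ℂ] F j) 0 (fun i => blkQ x i ∘ₗ yL i) j
        = Fin.lastCases (motive := fun j => L j →ₗ[ℂ] F j) 0 (fun i => yF i ∘ₗ blkQ x i) j) ∧
    (∀ j : Fin (n + 1),
      Fin.cases (motive := fun j => F j →ₗ[ℂ] L j) 0 (fun i => blkS x i ∘ₗ yF i) j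
        = Fin.lastCases (motive := fun j => F j →ₗ[ℂ] L j) 0 (fun i => yL i ∘ₗ blkS x i) j) ∧
    (∀ j : Fin (n + 1),
      Fin.cases (motive := fun j => L j →ₗ[ℂ] L j) 0 (fun i => blkT x i ∘ₗ yL i) j
        = Fin.lastCases (motive := fun j => L j →ₗ[ℂ] L j) 0 (fun i => yL i ∘ₗ blkT x i) j) := by
  have hFF_L : ∀ j, ffb (Fin.cases (motive := fun j => (F j × L j) →ₗ[ℂ] (F j × L j)) 0
      (fun i => x i ∘ₗ epsD (yF, yL) i) j)
      = Fin.cases (motive := fun j => F j →ₗ[ℂ] F j) 0 (fun i => blkP x i ∘ₗ yF i) j := by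
    intro j
    induction j using Fin.cases with
    | zero => apply LinearMap.ext; intro v; simp [ffb]
    | succ i => apply LinearMap.ext; intro v; simp [ffb, epsD, blkP]
  have hFF_R : ∀ j, ffb (Fin.lastCases (motive := fun j => (F j × L j) →ₗ[ℂ] (F j × L j)) 0
      (fun i => epsD (yF, yL) i ∘ₗ x i) j)
      = Fin.lastCases (motive := fun j => F j →ₗ[ℂ] F j) 0 (fun i => yF i ∘ₗ blkP x i) j := by
    intro j
    induction j using Fin.lastCases with
    | last => apply LinearMap.ext; intro v; simp [ffb]
    | cast i => apply LinearMap.ext; intro v; simp [ffb, epsD, blkP]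
  have hFL_L : ∀ j, flb (Fin.cases (motive := fun j => (F j × L j) →ₗ[ℂ] (F j × L j)) 0
      (fun i => x i ∘ₗ epsD (yF, yL) i) j)
      = Fin.cases (motive := fun j => L j →ₗ[ℂ] F j) 0 (fun i => blkQ x i ∘ₗ yL i) j := by
    intro j
    induction j using Fin.cases with
    | zero => apply LinearMap.ext; intro v; simp [flb]
    | succ i => apply LinearMap.ext; intro v; simp [flb, epsD, blkQ]
  have hFL_R : ∀ j, flb (Fin.lastCases (motive := fun j => (F j × L j) →ₗ[ℂ] (F j × L j)) 0
      (fun i => epsD (yF, yL) i ∘ₗ x i) j)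
      = Fin.lastCases (motive := fun j => L j →ₗ[ℂ] F j) 0 (fun i => yF i ∘ₗ blkQ x i) j := by
    intro j
    induction j using Fin.lastCases with
    | last => apply LinearMap.ext; intro v; simp [flb]
    | cast i => apply LinearMap.ext; intro v; simp [flb, epsD, blkQ]
  have hLF_L : ∀ j, lfb (Fin.cases (motive := fun j => (F j × L j) →ₗ[ℂ] (F j × L j)) 0
      (fun i => x i ∘ₗ epsD (yF, yL) i) j)
      = Fin.cases (motive := fun j => F j →ₗ[ℂ] L j) 0 (fun i => blkS x i ∘ₗ yF i) j := by
    intro j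
    induction j using Fin.cases with
    | zero => apply LinearMap.ext; intro v; simp [lfb]
    | succ i => apply LinearMap.ext; intro v; simp [lfb, epsD, blkS]
  have hLF_R : ∀ j, lfb (Fin.lastCases (motive := fun j => (F j × L j) →ₗ[ℂ] (F j × L j)) 0
      (fun i => epsD (yF, yL) i ∘ₗ x i) j)
      = Fin.lastCases (motive := fun j => F j →ₗ[ℂ] L j) 0 (fun i => yL i ∘ₗ blkS x i) j := by
    intro j
    induction j using Fin.lastCases with
    | last => apply LinearMap.ext; intro v; simp [lfb]
    | cast i => apply LinearMap.ext; intro v; simp [lfb, epsD, blkS]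
  have hLL_L : ∀ j, llb (Fin.cases (motive := fun j => (F j × L j) →ₗ[ℂ] (F j × L j)) 0
      (fun i => x i ∘ₗ epsD (yF, yL) i) j)
      = Fin.cases (motive := fun j => L j →ₗ[ℂ] L j) 0 (fun i => blkT x i ∘ₗ yL i) j := by
    intro j
    induction j using Fin.cases with
    | zero => apply LinearMap.ext; intro v; simp [llb]
    | succ i => apply LinearMap.ext; intro v; simp [llb, epsD, blkT]
  have hLL_R : ∀ j, llb (Fin.lastCases (motive := fun j => (F j × L j) →ₗ[ℂ] (F j × L j)) 0
      (fun i => epsD (yF, yL) i ∘ₗ x i) j)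
      = Fin.lastCases (motive := fun j => L j →ₗ[ℂ] L j) 0 (fun i => yL i ∘ₗ blkT x i) j := by
    intro j
    induction j using Fin.lastCases with
    | last => apply LinearMap.ext; intro v; simp [llb]
    | cast i => apply LinearMap.ext; intro v; simp [llb, epsD, blkT]
  exact ⟨fun j => by rw [← hFF_L j, hc j, hFF_R j],
    fun j => by rw [← hFL_L j, hc j, hFL_R j],
    fun j => by rw [← hLF_L j, hc j, hLF_R j],
    fun j => by rw [← hLL_L j, hc j, hLL_R j]⟩

end Extract
/-! ### Direction 1: `Λ'_B ⊆ Zcl(Λ_C)` -/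

section CompZero

variable {M N P : Type} [AddCommGroup M] [Module ℂ M] [AddCommGroup N] [Module ℂ N]
  [AddCommGroup P] [Module ℂ P]

theorem eq_zero_of_inj_comp {f : M →ₗ[ℂ] N} {g : N →ₗ[ℂ] P}
    (hg : Function.Injective g) (h : g ∘ₗ f = 0) : f = 0 := by
  apply LinearMap.ext
  intro v
  apply hg
  simpa using LinearMap.congr_fun h v

theorem eq_zero_of_comp_surj {f : N →ₗ[ℂ] P} {g : M →ₗ[ℂ] N}
    (hg : Function.Surjective g) (h : f ∘ₗ g = 0) : f = 0 := by
  apply LinearMap.ext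
  intro v
  obtain ⟨u, rfl⟩ := hg v
  simpa using LinearMap.congr_fun h u

end CompZero

section Dir1

variable {F L : Fin (n + 1) → Type}
  [∀ i, AddCommGroup (F i)] [∀ i, Module ℂ (F i)] [∀ i, FiniteDimensional ℂ (F i)]
  [∀ i, AddCommGroup (L i)] [∀ i, Module ℂ (L i)] [∀ i, FiniteDimensional ℂ (L i)]
  (hL : ∀ i, Module.finrank ℂ (L i) = 1)

include hL

/-- Q-blocks vanish (descending recursion). -/
theorem vanishQ (yF : VogD n F) (yL : VogD n L) (hyL : ∀ i, yL i ≠ 0)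
    (Q : ∀ i : Fin n, L i.castSucc →ₗ[ℂ] F i.succ)
    (hQ : ∀ j : Fin (n + 1),
      Fin.cases (motive := fun j => L j →ₗ[ℂ] F j) 0 (fun i => Q i ∘ₗ yL i) j
        = Fin.lastCases (motive := fun j => L j →ₗ[ℂ] F j) 0 (fun i => yF i ∘ₗ Q i) j) :
    ∀ i : Fin n, Q i = 0 := by
  have hsurj : ∀ i : Fin n, Function.Surjective (yL i) :=
    fun i => (oneDim_bijective (yL i) (hyL i) (hL _) (hL _)).2
  have G : ∀ j : Fin (n + 1),
      Fin.lastCases (motive := fun j => L j →ₗ[ℂ] F j) 0 (fun i => yF i ∘ₗ Q i) j = 0 := by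
    intro j
    induction j using Fin.reverseInduction with
    | last => simp
    | cast i ih =>
      rw [Fin.lastCases_castSucc]
      have h1 : Q i ∘ₗ yL i = 0 := by
        have := hQ i.succ
        rw [Fin.cases_succ] at this
        rw [this, ih]
      have : Q i = 0 := eq_zero_of_comp_surj (hsurj i) h1
      rw [this, LinearMap.comp_zero]
  intro i
  have h1 := hQ i.succ
  rw [Fin.cases_succ, G i.succ] at h1
  exact eq_zero_of_comp_surj (hsurj i) h1

/-- S-blocks vanish (ascending recursion). -/
theorem vanishS (yF : VogD n F) (yL : VogD n L) (hyL : ∀ i, yL i ≠ 0)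
    (S : ∀ i : Fin n, F i.castSucc →ₗ[ℂ] L i.succ)
    (hS : ∀ j : Fin (n + 1),
      Fin.cases (motive := fun j => F j →ₗ[ℂ] L j) 0 (fun i => S i ∘ₗ yF i) j
        = Fin.lastCases (motive := fun j => F j →ₗ[ℂ] L j) 0 (fun i => yL i ∘ₗ S i) j) :
    ∀ i : Fin n, S i = 0 := by
  have hinj : ∀ i : Fin n, Function.Injective (yL i) :=
    fun i => (oneDim_bijective (yL i) (hyL i) (hL _) (hL _)).1
  have G : ∀ j : Fin (n + 1),
      Fin.cases (motive := fun j => F j →ₗ[ℂ] L j) 0 (fun i => S i ∘ₗ yF i) j = 0 := by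
    intro j
    induction j using Fin.induction with
    | zero => simp
    | succ i ih =>
      rw [Fin.cases_succ]
      have h1 : yL i ∘ₗ S i = 0 := by
        have := hS i.castSucc
        rw [Fin.lastCases_castSucc, ih] at this
        exact this.symm
      have : S i = 0 := eq_zero_of_inj_comp (hinj i) h1
      rw [this, LinearMap.zero_comp]
  intro i
  have h1 := hS i.castSucc
  rw [Fin.lastCases_castSucc, G i.castSucc] at h1
  exact eq_zero_of_inj_comp (hinj i) h1.symm

/-- T-blocks vanish (ascending recursion). -/
theorem vanishT (yL : VogD n L) (hyL : ∀ i, yL i ≠ 0)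
    (T : Vog n L)
    (hT : ∀ j : Fin (n + 1),
      Fin.cases (motive := fun j => L j →ₗ[ℂ] L j) 0 (fun i => T i ∘ₗ yL i) j
        = Fin.lastCases (motive := fun j => L j →ₗ[ℂ] L j) 0 (fun i => yL i ∘ₗ T i) j) :
    ∀ i : Fin n, T i = 0 := by
  have hinj : ∀ i : Fin n, Function.Injective (yL i) :=
    fun i => (oneDim_bijective (yL i) (hyL i) (hL _) (hL _)).1
  have hsurj : ∀ i : Fin n, Function.Surjective (yL i) :=
    fun i => (oneDim_bijective (yL i) (hyL i) (hL _) (hL _)).2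
  have G : ∀ j : Fin (n + 1),
      Fin.cases (motive := fun j => L j →ₗ[ℂ] L j) 0 (fun i => T i ∘ₗ yL i) j = 0 := by
    intro j
    induction j using Fin.induction with
    | zero => simp
    | succ i ih =>
      rw [Fin.cases_succ]
      have h1 : yL i ∘ₗ T i = 0 := by
        have := hT i.castSucc
        rw [Fin.lastCases_castSucc, ih] at this
        exact this.symm
      have : T i = 0 := eq_zero_of_inj_comp (hinj i) h1
      rw [this, LinearMap.zero_comp]
  intro i
  have h1 := hT i.castSucc
  rw [Fin.lastCases_castSucc, G i.castSucc] at h1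
  exact eq_zero_of_inj_comp (hinj i) h1.symm

/-- Shape forcing: if `x` is conormal to `ᵗε(y_F, y_L)` with all `y_L` components
nonzero, then `x = ε(P, 0)` where `P` is conormal to `y_F`. -/
theorem conormal_forced_shape (x : Vog n (fun i => F i × L i)) (yF : VogD n F)
    (yL : VogD n L) (hyL : ∀ i, yL i ≠ 0)
    (hc : IsConormal (E := fun i => F i × L i) x (epsD (yF, yL))) :
    x = eps (blkP x, (0 : Vog n L)) ∧ IsConormal (blkP x) yF := by
  obtain ⟨hP, hQ, hS, hT⟩ := conormal_to_diagY x yF yL hc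
  have hQ0 := vanishQ hL yF yL hyL (blkQ x) hQ
  have hS0 := vanishS hL yF yL hyL (blkS x) hS
  have hT0 := vanishT hL yL hyL (blkT x) hT
  refine ⟨?_, hP⟩
  funext i
  apply LinearMap.ext
  rintro ⟨f, l⟩
  have hfl : ((f, l) : F i.castSucc × L i.castSucc) = (f, 0) + (0, l) := by simp
  rw [hfl, map_add, map_add]
  have e1 : x i (f, 0) = (blkP x i f, blkS x i f) := by
    simp [blkP, blkS, Prod.ext_iff]
  have e2 : x i (0, l) = (blkQ x i l, blkT x i l) := by
    simp [blkQ, blkT, Prod.ext_iff]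
  rw [e1, e2, hQ0 i, hS0 i, hT0 i]
  simp [eps, Prod.ext_iff]
end Dir1
/-! ### Orbit helpers and direction 1 assembly -/

section OrbitHelpers

variable {E : Fin (n + 1) → Type} [∀ i, AddCommGroup (E i)] [∀ i, Module ℂ (E i)]

theorem Vact_symm_cancel' (h : ∀ i, E i ≃ₗ[ℂ] E i) (x : Vog n E) :
    Vact (fun i => (h i).symm) (Vact h x) = x := by
  rw [Vact_Vact]
  have : (fun i => ((h i).trans (h i).symm)) = fun i => LinearEquiv.refl ℂ (E i) := by
    funext i; ext v; simp
  rw [this, Vact_refl]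

theorem VactD_symm_cancel' (h : ∀ i, E i ≃ₗ[ℂ] E i) (y : VogD n E) :
    VactD (fun i => (h i).symm) (VactD h y) = y := by
  rw [VactD_VactD]
  have : (fun i => ((h i).trans (h i).symm)) = fun i => LinearEquiv.refl ℂ (E i) := by
    funext i; ext v; simp
  rw [this, VactD_refl]

/-- An orbit through a point equals the orbit of that point. -/
theorem orbit_mem_iff {C : Set (Vog n E)} (hC : IsOrbit C) {x₀ : Vog n E} (hx₀ : x₀ ∈ C) :
    ∀ u ∈ C, ∃ h : ∀ i, E i ≃ₗ[ℂ] E i, u = Vact h x₀ := by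
  obtain ⟨z, rfl⟩ := hC
  obtain ⟨h₁, hx₁⟩ := hx₀
  intro u hu
  obtain ⟨h₂, hu₂⟩ := hu
  refine ⟨fun i => ((h₁ i).symm.trans (h₂ i)), ?_⟩
  have hz : z = Vact (fun i => (h₁ i).symm) x₀ := by
    rw [hx₁, Vact_symm_cancel']
  rw [hu₂, hz, Vact_Vact]

theorem orbitD_mem_iff {B : Set (VogD n E)} (hB : IsOrbitD B) {y₀ : VogD n E} (hy₀ : y₀ ∈ B) :
    ∀ w ∈ B, ∃ h : ∀ i, E i ≃ₗ[ℂ] E i, w = VactD h y₀ := by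
  obtain ⟨z, rfl⟩ := hB
  obtain ⟨h₁, hy₁⟩ := hy₀
  intro w hw
  obtain ⟨h₂, hw₂⟩ := hw
  refine ⟨fun i => ((h₁ i).symm.trans (h₂ i)), ?_⟩
  have hz : z = VactD (fun i => (h₁ i).symm) y₀ := by
    rw [hy₁, VactD_symm_cancel']
  rw [hw₂, hz, VactD_VactD]

theorem Vact_zero (h : ∀ i, E i ≃ₗ[ℂ] E i) : Vact h (0 : Vog n E) = 0 := by
  funext i; apply LinearMap.ext; intro v; simp [Vact]

end OrbitHelpers

section ChainLemma

variable {L : Fin (n + 1) → Type}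
  [∀ i, AddCommGroup (L i)] [∀ i, Module ℂ (L i)] [∀ i, FiniteDimensional ℂ (L i)]
  (hL : ∀ i, Module.finrank ℂ (L i) = 1)

include hL

/-- Any everywhere-nonzero element of `V_L*` is in the orbit of `y_L`. -/
theorem chain_orbit (yL : VogD n L) (hyL : ∀ i, yL i ≠ 0) (δ : VogD n L)
    (hδ : ∀ i, δ i ≠ 0) : ∃ hLam : ∀ j, L j ≃ₗ[ℂ] L j, δ = VactD hLam yL := by
  set hLam : ∀ j, L j ≃ₗ[ℂ] L j :=
    Fin.induction (LinearEquiv.refl ℂ (L 0))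
      (fun i hc => ((oneDimEquiv (yL i) (hyL i) (hL _) (hL _)).trans hc).trans
        (oneDimEquiv (δ i) (hδ i) (hL _) (hL _)).symm) with hdef
  refine ⟨hLam, ?_⟩
  funext i
  apply LinearMap.ext
  intro v
  have hsucc : hLam i.succ = ((oneDimEquiv (yL i) (hyL i) (hL _) (hL _)).trans
      (hLam i.castSucc)).trans (oneDimEquiv (δ i) (hδ i) (hL _) (hL _)).symm := by
    rw [hdef]
    exact Fin.induction_succ _ _ i
  simp only [VactD, LinearMap.comp_apply, LinearEquiv.coe_coe]
  set eδ := oneDimEquiv (δ i) (hδ i) (hL _) (hL _) with heδ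
  set elam := oneDimEquiv (yL i) (hyL i) (hL _) (hL _) with helam
  set w := (hLam i.succ).symm v with hw
  have hv : v = hLam i.succ w := (LinearEquiv.apply_symm_apply _ _).symm
  have hsw : hLam i.succ w = eδ.symm ((hLam i.castSucc) (elam w)) := by
    rw [hsucc]; rfl
  have hyw : yL i w = elam w := rfl
  rw [hv, hsw, hyw]
  have : ∀ u, δ i (eδ.symm u) = u := by
    intro u
    have := eδ.apply_symm_apply u
    rwa [heδ, oneDimEquiv_apply] at this
  rw [this]

end ChainLemma

section Dir1Main

variable {F L : Fin (n + 1) → Type}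
  [∀ i, AddCommGroup (F i)] [∀ i, Module ℂ (F i)] [∀ i, FiniteDimensional ℂ (F i)]
  [∀ i, AddCommGroup (L i)] [∀ i, Module ℂ (L i)] [∀ i, FiniteDimensional ℂ (L i)]

/-- The pairwise action as an affine (indeed linear) map. -/
theorem pairAct_affine (h : ∀ i, (F i × L i) ≃ₗ[ℂ] (F i × L i)) :
    ∃ (T0 : (Vog n (fun i => F i × L i) × VogD n (fun i => F i × L i)) →ₗ[ℂ]
        (Vog n (fun i => F i × L i) × VogD n (fun i => F i × L i))),
      ∀ p, (Vact h p.1, VactD h p.2) = T0 p := by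
  refine ⟨{ toFun := fun p => (Vact h p.1, VactD h p.2)
            map_add' := ?_
            map_smul' := ?_ }, fun p => rfl⟩
  · rintro ⟨x, y⟩ ⟨x', y'⟩
    refine Prod.ext ?_ ?_ <;>
      · funext i; apply LinearMap.ext; intro v; simp [Vact, VactD]
  · rintro t ⟨x, y⟩
    refine Prod.ext ?_ ?_ <;>
      · funext i; apply LinearMap.ext; intro v; simp [Vact, VactD]

/-- Stability of `Lam C` and `LamD B` under the `H`-action, on Zariski closures. -/
theorem Zcl_Lam_stable {C : Set (Vog n (fun i => F i × L i))} (hC : IsOrbit C)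
    (h : ∀ i, (F i × L i) ≃ₗ[ℂ] (F i × L i))
    {p : Vog n (fun i => F i × L i) × VogD n (fun i => F i × L i)}
    (hp : p ∈ Zcl (Lam C)) : (Vact h p.1, VactD h p.2) ∈ Zcl (Lam C) := by
  obtain ⟨T0, hT0⟩ := pairAct_affine h
  have hmap : ∀ m ∈ Lam C, (Vact h m.1, VactD h m.2) ∈ Zcl (Lam C) := by
    rintro ⟨x, y⟩ ⟨hx, hcon⟩
    apply subset_Zcl
    refine ⟨?_, hcon.conj h⟩
    obtain ⟨z, rfl⟩ := hC
    obtain ⟨h₂, rfl⟩ := hx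
    exact ⟨fun i => (h₂ i).trans (h i), (Vact_Vact h h₂ z).symm ▸ rfl⟩
  exact Zcl_map (fun p => (Vact h p.1, VactD h p.2)) T0 0
    (fun m => by show (Vact h m.1, VactD h m.2) = T0 m + 0; rw [hT0 m, add_zero]) hmap p hp

theorem Zcl_LamD_stable {B : Set (VogD n (fun i => F i × L i))} (hB : IsOrbitD B)
    (h : ∀ i, (F i × L i) ≃ₗ[ℂ] (F i × L i))
    {p : Vog n (fun i => F i × L i) × VogD n (fun i => F i × L i)}
    (hp : p ∈ Zcl (LamD B)) : (Vact h p.1, VactD h p.2) ∈ Zcl (LamD B) := by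
  obtain ⟨T0, hT0⟩ := pairAct_affine h
  have hmap : ∀ m ∈ LamD B, (Vact h m.1, VactD h m.2) ∈ Zcl (LamD B) := by
    rintro ⟨x, y⟩ ⟨hy, hcon⟩
    apply subset_Zcl
    refine ⟨?_, hcon.conj h⟩
    obtain ⟨z, rfl⟩ := hB
    obtain ⟨h₂, rfl⟩ := hy
    exact ⟨fun i => (h₂ i).trans (h i), (VactD_VactD h h₂ z).symm ▸ rfl⟩
  exact Zcl_map (fun p => (Vact h p.1, VactD h p.2)) T0 0
    (fun m => by show (Vact h m.1, VactD h m.2) = T0 m + 0; rw [hT0 m, add_zero]) hmap p hp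

variable (hL : ∀ i, Module.finrank ℂ (L i) = 1)
  (CF : Set (Vog n F)) (hCF : IsOrbit CF)
  (BF : Set (VogD n F)) (hBF : IsOrbitD BF)
  (hdual : Zcl (Lam CF) = Zcl (LamD BF))
  (xF : Vog n F) (hxF : xF ∈ CF) (yF' : VogD n F) (hyF' : yF' ∈ BF)
  (yL : VogD n L) (hyL : ∀ i, yL i ≠ 0)

include hL hCF hBF hdual hxF hyF' hyL

theorem dir1 :
    LamD {y : VogD n (fun i => F i × L i) |
        ∃ h : ∀ i, (F i × L i) ≃ₗ[ℂ] (F i × L i), y = VactD h (epsD (yF', yL))}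
      ⊆ Zcl (Lam {x : Vog n (fun i => F i × L i) |
        ∃ h : ∀ i, (F i × L i) ≃ₗ[ℂ] (F i × L i), x = Vact h (eps (xF, (0 : Vog n L)))}) := by
  set Cset := {x : Vog n (fun i => F i × L i) |
    ∃ h : ∀ i, (F i × L i) ≃ₗ[ℂ] (F i × L i), x = Vact h (eps (xF, (0 : Vog n L)))} with hCset
  rintro ⟨x, y⟩ ⟨hy, hcon⟩
  obtain ⟨h, rfl⟩ := hy
  set x' := Vact (fun i => (h i).symm) x with hx'
  have hxx' : x = Vact h x' := by rw [hx', Vact_symm_cancel]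
  have hcon' : IsConormal x' (epsD (yF', yL)) := by
    have : IsConormal (Vact h x') (VactD h (epsD (yF', yL))) := by
      rwa [← hxx']
    exact (isConormal_conj_iff h).mp this
  obtain ⟨hshape, hPcon⟩ := conormal_forced_shape hL x' yF' yL hyL hcon'
  -- the F-part pair lies in Zcl (Lam CF)
  have hmemF : ((blkP x', yF') : Vog n F × VogD n F) ∈ Zcl (Lam CF) := by
    rw [hdual]
    exact subset_Zcl _ ⟨hyF', hPcon⟩
  -- affine map Φ₁
  have haff : ∃ (T0 : (Vog n F × VogD n F) →ₗ[ℂ]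
      (Vog n (fun i => F i × L i) × VogD n (fun i => F i × L i))) (c : _),
      ∀ m : Vog n F × VogD n F,
        ((eps (m.1, (0 : Vog n L)), epsD (m.2, yL)) :
          Vog n (fun i => F i × L i) × VogD n (fun i => F i × L i)) = T0 m + c := by
    refine ⟨{ toFun := fun m => (eps (m.1, (0 : Vog n L)), epsD (m.2, (0 : VogD n L)))
              map_add' := ?_
              map_smul' := ?_ }, ((0 : Vog n (fun i => F i × L i)),
                epsD ((0 : VogD n F), yL)), fun m => ?_⟩
    · rintro ⟨u, w⟩ ⟨u', w'⟩
      refine Prod.ext ?_ ?_ <;>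
        · funext i; apply LinearMap.ext; rintro ⟨f, l⟩; simp [eps, epsD, Prod.ext_iff]
    · rintro t ⟨u, w⟩
      refine Prod.ext ?_ ?_ <;>
        · funext i; apply LinearMap.ext; rintro ⟨f, l⟩; simp [eps, epsD, Prod.ext_iff]
    · refine Prod.ext ?_ ?_
      · simp
      · funext i; apply LinearMap.ext; rintro ⟨f, l⟩
        simp [eps, epsD, Prod.ext_iff]
  obtain ⟨T0, c0, hT0⟩ := haff
  have hmap : ∀ m ∈ Lam CF,
      ((eps (m.1, (0 : Vog n L)), epsD (m.2, yL)) :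
        Vog n (fun i => F i × L i) × VogD n (fun i => F i × L i)) ∈ Zcl (Lam Cset) := by
    rintro ⟨u, w⟩ ⟨hu, hcuw⟩
    apply subset_Zcl
    constructor
    · obtain ⟨hFu, hueq⟩ := orbit_mem_iff hCF hxF u hu
      refine ⟨prodTup hFu (fun j => LinearEquiv.refl ℂ (L j)), ?_⟩
      rw [Vact_prodTup, Vact_zero, hueq]
    · exact IsConormal.prodMk hcuw (isConormal_zero_left yL)
  have hstep := Zcl_map _ T0 c0 hT0 hmap _ hmemF
  have hx'mem : ((x', epsD (yF', yL)) :
      Vog n (fun i => F i × L i) × VogD n (fun i => F i × L i)) ∈ Zcl (Lam Cset) := by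
    have : ((eps (blkP x', (0 : Vog n L)), epsD (yF', yL)) :
        Vog n (fun i => F i × L i) × VogD n (fun i => F i × L i)) ∈ Zcl (Lam Cset) := hstep
    rwa [← hshape] at this
  have hfinal := Zcl_Lam_stable (C := Cset)
    ⟨eps (xF, (0 : Vog n L)), rfl⟩ h hx'mem
  simpa [← hxx'] using hfinal
end Dir1Main
section Linearity

variable {E : Fin (n + 1) → Type} [∀ i, AddCommGroup (E i)] [∀ i, Module ℂ (E i)]

theorem Vact_add (g : ∀ i, E i ≃ₗ[ℂ] E i) (x x' : Vog n E) :
    Vact g (x + x') = Vact g x + Vact g x' := by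
  funext i; apply LinearMap.ext; intro v; simp [Vact]

theorem Vact_smul (g : ∀ i, E i ≃ₗ[ℂ] E i) (t : ℂ) (x : Vog n E) :
    Vact g (t • x) = t • Vact g x := by
  funext i; apply LinearMap.ext; intro v; simp [Vact]

theorem VactD_add (g : ∀ i, E i ≃ₗ[ℂ] E i) (y y' : VogD n E) :
    VactD g (y + y') = VactD g y + VactD g y' := by
  funext i; apply LinearMap.ext; intro v; simp [VactD]

theorem VactD_smul (g : ∀ i, E i ≃ₗ[ℂ] E i) (t : ℂ) (y : VogD n E) :
    VactD g (t • y) = t • VactD g y := by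
  funext i; apply LinearMap.ext; intro v; simp [VactD]

end Linearity

section Splitters

variable {F L : Fin (n + 1) → Type}
  [∀ i, AddCommGroup (F i)] [∀ i, Module ℂ (F i)]
  [∀ i, AddCommGroup (L i)] [∀ i, Module ℂ (L i)]

theorem eps_add0 (u u' : Vog n F) :
    eps ((u + u' : Vog n F), (0 : Vog n L)) = eps (u, 0) + eps (u', 0) := by
  funext i; apply LinearMap.ext; rintro ⟨f, l⟩; simp [eps, Prod.ext_iff]

theorem eps_smul0 (t : ℂ) (u : Vog n F) :
    eps ((t • u : Vog n F), (0 : Vog n L)) = t • eps (u, 0) := by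
  funext i; apply LinearMap.ext; rintro ⟨f, l⟩; simp [eps, Prod.ext_iff]

theorem epsD_add0 (w w' : VogD n F) :
    epsD ((w + w' : VogD n F), (0 : VogD n L)) = epsD (w, 0) + epsD (w', 0) := by
  funext i; apply LinearMap.ext; rintro ⟨f, l⟩; simp [epsD, Prod.ext_iff]

theorem epsD_smul0 (t : ℂ) (w : VogD n F) :
    epsD ((t • w : VogD n F), (0 : VogD n L)) = t • epsD (w, 0) := by
  funext i; apply LinearMap.ext; rintro ⟨f, l⟩; simp [epsD, Prod.ext_iff]

theorem epsD_split (w : VogD n F) (δ : VogD n L) :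
    epsD (w, δ) = epsD (w, 0) + epsD (0, δ) := by
  funext i; apply LinearMap.ext; rintro ⟨f, l⟩; simp [epsD, Prod.ext_iff]

end Splitters
/-! ### Direction 2: recursive construction of the gauge transformation -/

section Dir2Defs

variable {F L : Fin (n + 1) → Type}
  [∀ i, AddCommGroup (F i)] [∀ i, Module ℂ (F i)]
  [∀ i, AddCommGroup (L i)] [∀ i, Module ℂ (L i)]
  (hL : ∀ i, Module.finrank ℂ (L i) = 1)
  (xF : Vog n F) (a : VogD n F)
  (b : ∀ i : Fin n, L i.succ →ₗ[ℂ] F i.castSucc)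
  (c : ∀ i : Fin n, F i.succ →ₗ[ℂ] L i.castSucc)
  (d : VogD n L) (yL : VogD n L)

/-- The upper-triangular correction, defined by downward recursion. -/
noncomputable def betaF (s : Fin n → ℂ) : ∀ j : Fin (n + 1), L j →ₗ[ℂ] F j :=
  Fin.reverseInduction 0 (fun i prev =>
    if h : (d i + s i • yL i + c i ∘ₗ prev) ≠ 0 then
      (b i + a i ∘ₗ prev) ∘ₗ
        ((oneDimEquiv (d i + s i • yL i + c i ∘ₗ prev) h (hL _) (hL _)).symm :
          L i.castSucc ≃ₗ[ℂ] L i.succ).toLinearMap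
    else 0)

/-- The deformed `d`-block. -/
noncomputable def DeltaF (s : Fin n → ℂ) (i : Fin n) : L i.succ →ₗ[ℂ] L i.castSucc :=
  d i + s i • yL i + c i ∘ₗ betaF hL a b c d yL s i.succ

theorem betaF_last (s : Fin n → ℂ) : betaF hL a b c d yL s (Fin.last n) = 0 := by
  simp [betaF]

theorem betaF_castSucc (s : Fin n → ℂ) (i : Fin n) :
    betaF hL a b c d yL s i.castSucc =
      if h : DeltaF hL a b c d yL s i ≠ 0 then
        (b i + a i ∘ₗ betaF hL a b c d yL s i.succ) ∘ₗ
          ((oneDimEquiv (DeltaF hL a b c d yL s i) h (hL _) (hL _)).symm :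
            L i.castSucc ≃ₗ[ℂ] L i.succ).toLinearMap
      else 0 := by
  conv_lhs => rw [betaF, Fin.reverseInduction_castSucc]
  rfl

/-- The modified `a`-block. -/
noncomputable def astarF (s : Fin n → ℂ) : VogD n F :=
  fun i => a i - betaF hL a b c d yL s i.castSucc ∘ₗ c i

/-- The lower-triangular correction, defined by upward recursion. -/
noncomputable def gammaF (s : Fin n → ℂ) : ∀ j : Fin (n + 1), F j →ₗ[ℂ] L j :=
  Fin.induction 0 (fun i prev =>
    if h : DeltaF hL a b c d yL s i ≠ 0 then
      ((oneDimEquiv (DeltaF hL a b c d yL s i) h (hL _) (hL _)).symm :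
        L i.castSucc ≃ₗ[ℂ] L i.succ).toLinearMap ∘ₗ
        (prev ∘ₗ astarF hL a b c d yL s i - c i)
    else 0)

theorem gammaF_zero (s : Fin n → ℂ) : gammaF hL a b c d yL s 0 = 0 := rfl

theorem gammaF_succ (s : Fin n → ℂ) (i : Fin n) :
    gammaF hL a b c d yL s i.succ =
      if h : DeltaF hL a b c d yL s i ≠ 0 then
        ((oneDimEquiv (DeltaF hL a b c d yL s i) h (hL _) (hL _)).symm :
          L i.castSucc ≃ₗ[ℂ] L i.succ).toLinearMap ∘ₗ
          (gammaF hL a b c d yL s i.castSucc ∘ₗ astarF hL a b c d yL s i - c i)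
      else 0 := by
  conv_lhs => rw [gammaF]
  rw [Fin.induction_succ]
  rfl

/-- Pointwise recursion identity for `betaF`. -/
theorem betaF_spec (s : Fin n → ℂ) (i : Fin n) (hΔ : DeltaF hL a b c d yL s i ≠ 0)
    (l : L i.succ) :
    betaF hL a b c d yL s i.castSucc (DeltaF hL a b c d yL s i l)
      = b i l + a i (betaF hL a b c d yL s i.succ l) := by
  rw [betaF_castSucc, dif_pos hΔ]
  have : ((oneDimEquiv (DeltaF hL a b c d yL s i) hΔ (hL _) (hL _)).symm :
      L i.castSucc ≃ₗ[ℂ] L i.succ) (DeltaF hL a b c d yL s i l) = l := by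
    rw [← oneDimEquiv_apply (DeltaF hL a b c d yL s i) hΔ (hL _) (hL _) l,
      LinearEquiv.symm_apply_apply]
  simp only [LinearMap.comp_apply, LinearEquiv.coe_coe, this, LinearMap.add_apply]

/-- Pointwise recursion identity for `gammaF`. -/
theorem gammaF_spec (s : Fin n → ℂ) (i : Fin n) (hΔ : DeltaF hL a b c d yL s i ≠ 0)
    (f : F i.succ) :
    DeltaF hL a b c d yL s i (gammaF hL a b c d yL s i.succ f)
      = gammaF hL a b c d yL s i.castSucc (astarF hL a b c d yL s i f) - c i f := by
  rw [gammaF_succ, dif_pos hΔ]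
  simp only [LinearMap.comp_apply, LinearEquiv.coe_coe, LinearMap.sub_apply]
  have : ∀ u : L i.castSucc, DeltaF hL a b c d yL s i
      ((oneDimEquiv (DeltaF hL a b c d yL s i) hΔ (hL _) (hL _)).symm u) = u := by
    intro u
    have := (oneDimEquiv (DeltaF hL a b c d yL s i) hΔ (hL _) (hL _)).apply_symm_apply u
    rwa [oneDimEquiv_apply] at this
  rw [this]

end Dir2Defs
section Dir2Vanish

variable {F L : Fin (n + 1) → Type}
  [∀ i, AddCommGroup (F i)] [∀ i, Module ℂ (F i)]
  [∀ i, AddCommGroup (L i)] [∀ i, Module ℂ (L i)]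
  (hL : ∀ i, Module.finrank ℂ (L i) = 1)
  (xF : Vog n F) (a : VogD n F)
  (b : ∀ i : Fin n, L i.succ →ₗ[ℂ] F i.castSucc)
  (c : ∀ i : Fin n, F i.succ →ₗ[ℂ] L i.castSucc)
  (d : VogD n L) (yL : VogD n L)

/-- Generic dite-congruence for constructions from a nonzero 1-dimensional map. -/
theorem dite_ne_congr {M N : Type} [AddCommGroup M] [Module ℂ M]
    [AddCommGroup N] [Module ℂ N] {α : Sort*} (Δ Δ' : M →ₗ[ℂ] N) (h : Δ = Δ')
    (f : ∀ g : M →ₗ[ℂ] N, g ≠ 0 → α) (z : α) :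
    (if hh : Δ ≠ 0 then f Δ hh else z) = (if hh : Δ' ≠ 0 then f Δ' hh else z) := by
  subst h; rfl

variable (hac : IsConormal xF a)
  (hbx : ∀ i : Fin n, xF i ∘ₗ b i = 0)
  (hcx : ∀ i : Fin n, c i ∘ₗ xF i = 0)

include hac hbx hcx in
/-- `x_F ∘ β = 0` (descending induction). -/
theorem betaF_vanish (s : Fin n → ℂ) :
    ∀ i : Fin n, ∀ v : L i.castSucc, xF i (betaF hL a b c d yL s i.castSucc v) = 0 := by
  have Hst : ∀ j : Fin (n + 1), ∀ v : L j,
      (Fin.lastCases (motive := fun j => F j →ₗ[ℂ] F j) 0 (fun i => a i ∘ₗ xF i) j)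
        (betaF hL a b c d yL s j v) = 0 := by
    intro j
    induction j using Fin.reverseInduction with
    | last => intro v; simp
    | cast i ih =>
      intro v
      rw [Fin.lastCases_castSucc, betaF_castSucc]
      by_cases hΔ : DeltaF hL a b c d yL s i ≠ 0
      · rw [dif_pos hΔ]
        set u := ((oneDimEquiv (DeltaF hL a b c d yL s i) hΔ (hL _) (hL _)).symm :
          L i.castSucc ≃ₗ[ℂ] L i.succ) v with hu
        have h1 : xF i (b i u) = 0 := by
          simpa using LinearMap.congr_fun (hbx i) u
        have h2 : xF i (a i (betaF hL a b c d yL s i.succ u)) = 0 := by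
          have hcase := hac i.succ
          rw [Fin.cases_succ] at hcase
          have := LinearMap.congr_fun hcase (betaF hL a b c d yL s i.succ u)
          simp only [LinearMap.comp_apply] at this
          rw [this]
          exact ih u
        simp only [LinearMap.comp_apply, LinearEquiv.coe_coe, LinearMap.add_apply, ← hu]
        rw [map_add, h1, h2, add_zero, map_zero]
      · rw [dif_neg hΔ]; simp
  intro i v
  rw [betaF_castSucc]
  by_cases hΔ : DeltaF hL a b c d yL s i ≠ 0
  · rw [dif_pos hΔ]
    set u := ((oneDimEquiv (DeltaF hL a b c d yL s i) hΔ (hL _) (hL _)).symm :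
      L i.castSucc ≃ₗ[ℂ] L i.succ) v with hu
    have h1 : xF i (b i u) = 0 := by simpa using LinearMap.congr_fun (hbx i) u
    have h2 : xF i (a i (betaF hL a b c d yL s i.succ u)) = 0 := by
      have hcase := hac i.succ
      rw [Fin.cases_succ] at hcase
      have := LinearMap.congr_fun hcase (betaF hL a b c d yL s i.succ u)
      simp only [LinearMap.comp_apply] at this
      rw [this]
      exact Hst i.succ u
    simp only [LinearMap.comp_apply, LinearEquiv.coe_coe, LinearMap.add_apply, ← hu]
    rw [map_add, h1, h2, add_zero]
  · rw [dif_neg hΔ]; simp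

include hac hbx hcx in
/-- `γ ∘ x_F = 0` (ascending induction). -/
theorem gammaF_vanish (s : Fin n → ℂ) :
    ∀ i : Fin n, ∀ v : F i.castSucc, gammaF hL a b c d yL s i.succ (xF i v) = 0 := by
  have hastx : ∀ (i : Fin n) (v : F i.castSucc),
      astarF hL a b c d yL s i (xF i v) = a i (xF i v) := by
    intro i v
    simp only [astarF, LinearMap.sub_apply, LinearMap.comp_apply]
    have : c i (xF i v) = 0 := by simpa using LinearMap.congr_fun (hcx i) v
    rw [this, map_zero, sub_zero]
  have Gst : ∀ j : Fin (n + 1), ∀ v : F j,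
      gammaF hL a b c d yL s j
        ((Fin.cases (motive := fun j => F j →ₗ[ℂ] F j) 0 (fun i => xF i ∘ₗ a i) j) v)
        = 0 := by
    intro j
    induction j using Fin.induction with
    | zero => intro v; rw [gammaF_zero]; simp
    | succ i ih =>
      intro v
      rw [Fin.cases_succ, gammaF_succ]
      by_cases hΔ : DeltaF hL a b c d yL s i ≠ 0
      · rw [dif_pos hΔ]
        simp only [LinearMap.comp_apply, LinearMap.sub_apply, LinearEquiv.coe_coe]
        have hax : astarF hL a b c d yL s i (xF i (a i v)) = a i (xF i (a i v)) :=
          hastx i (a i v)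
        rw [hax]
        have hcav : c i (xF i (a i v)) = 0 := by
          simpa using LinearMap.congr_fun (hcx i) (a i v)
        rw [hcav]
        have haxa : a i (xF i (a i v)) =
            (Fin.cases (motive := fun j => F j →ₗ[ℂ] F j) 0
              (fun i => xF i ∘ₗ a i) i.castSucc) (a i v) := by
          have hcase := hac i.castSucc
          rw [Fin.lastCases_castSucc] at hcase
          have := LinearMap.congr_fun hcase (a i v)
          simp only [LinearMap.comp_apply] at this
          rw [← this]
        rw [haxa, ih (a i v)]
        simp
      · rw [dif_neg hΔ]; simp
  intro i v
  rw [gammaF_succ]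
  by_cases hΔ : DeltaF hL a b c d yL s i ≠ 0
  · rw [dif_pos hΔ]
    simp only [LinearMap.comp_apply, LinearMap.sub_apply, LinearEquiv.coe_coe]
    have hax := hastx i v
    rw [hax]
    have hcv : c i (xF i v) = 0 := by simpa using LinearMap.congr_fun (hcx i) v
    rw [hcv]
    have haxa : a i (xF i v) =
        (Fin.cases (motive := fun j => F j →ₗ[ℂ] F j) 0
          (fun i => xF i ∘ₗ a i) i.castSucc) v := by
      have hcase := hac i.castSucc
      rw [Fin.lastCases_castSucc] at hcase
      have := LinearMap.congr_fun hcase v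
      simp only [LinearMap.comp_apply] at this
      rw [← this]
    rw [haxa, Gst i.castSucc v]
    simp
  · rw [dif_neg hΔ]; simp

/-- `betaF` only depends on later coordinates. -/
theorem betaF_congr (s s' : Fin n → ℂ) :
    ∀ j : Fin (n + 1), (∀ i : Fin n, (j : ℕ) ≤ (i : ℕ) → s i = s' i) →
      betaF hL a b c d yL s j = betaF hL a b c d yL s' j := by
  intro j
  induction j using Fin.reverseInduction with
  | last => intro _; rw [betaF_last, betaF_last]
  | cast i ih =>
    intro hyp
    have hIH : betaF hL a b c d yL s i.succ = betaF hL a b c d yL s' i.succ := by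
      apply ih
      intro i' hi'
      apply hyp
      have : (i.castSucc : ℕ) ≤ (i.succ : ℕ) := by simp [Fin.coe_castSucc, Fin.val_succ]
      omega
    have hs : s i = s' i := hyp i (by simp [Fin.coe_castSucc])
    have hΔ : DeltaF hL a b c d yL s i = DeltaF hL a b c d yL s' i := by
      rw [DeltaF, DeltaF, hIH, hs]
    rw [betaF_castSucc, betaF_castSucc, hIH]
    exact dite_ne_congr _ _ hΔ
      (fun g hg => (b i + a i ∘ₗ betaF hL a b c d yL s' i.succ) ∘ₗ
        ((oneDimEquiv g hg (hL _) (hL _)).symm : L i.castSucc ≃ₗ[ℂ] L i.succ).toLinearMap) 0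

theorem DeltaF_congr (s s' : Fin n → ℂ) (i : Fin n)
    (h : ∀ i' : Fin n, (i : ℕ) ≤ (i' : ℕ) → s i' = s' i') :
    DeltaF hL a b c d yL s i = DeltaF hL a b c d yL s' i := by
  have hβ : betaF hL a b c d yL s i.succ = betaF hL a b c d yL s' i.succ := by
    apply betaF_congr
    intro i' hi'
    apply h
    simp only [Fin.val_succ] at hi'
    omega
  rw [DeltaF, DeltaF, hβ, h i (le_refl _)]

/-- Pencil structure of `DeltaF` in its own coordinate. -/
theorem DeltaF_pencil (s : Fin n → ℂ) (k : Fin n) (σ : ℂ) :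
    DeltaF hL a b c d yL (Function.update s k σ) k
      = DeltaF hL a b c d yL (Function.update s k 0) k + σ • yL k := by
  have hβ : betaF hL a b c d yL (Function.update s k σ) k.succ
      = betaF hL a b c d yL (Function.update s k 0) k.succ := by
    apply betaF_congr
    intro i' hi'
    simp only [Fin.val_succ] at hi'
    have hne : i' ≠ k := by
      intro h; rw [h] at hi'; omega
    rw [Function.update_of_ne hne, Function.update_of_ne hne]
  rw [DeltaF, DeltaF, hβ, Function.update_self, Function.update_self]
  apply LinearMap.ext
  intro v
  simp only [LinearMap.add_apply, LinearMap.smul_apply, LinearMap.comp_apply, zero_smul,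
    LinearMap.zero_apply, add_zero, zero_add]
  abel

theorem DeltaF_update_gt (s : Fin n → ℂ) (k : Fin n) (σ : ℂ) (j : Fin n)
    (hkj : (k : ℕ) < (j : ℕ)) :
    DeltaF hL a b c d yL (Function.update s k σ) j = DeltaF hL a b c d yL s j := by
  apply DeltaF_congr
  intro i' hi'
  have hne : i' ≠ k := by
    intro h; rw [h] at hi'; omega
  rw [Function.update_of_ne hne]

end Dir2Vanish
section Dir2Gauge

variable {F L : Fin (n + 1) → Type}
  [∀ i, AddCommGroup (F i)] [∀ i, Module ℂ (F i)]
  [∀ i, AddCommGroup (L i)] [∀ i, Module ℂ (L i)]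
  (hL : ∀ i, Module.finrank ℂ (L i) = 1)
  (xF : Vog n F) (a : VogD n F)
  (b : ∀ i : Fin n, L i.succ →ₗ[ℂ] F i.castSucc)
  (c : ∀ i : Fin n, F i.succ →ₗ[ℂ] L i.castSucc)
  (d : VogD n L) (yL : VogD n L)

/-- The gauge transformation. -/
noncomputable def gvog (s : Fin n → ℂ) : ∀ j, (F j × L j) ≃ₗ[ℂ] (F j × L j) :=
  fun j => (lequiv (gammaF hL a b c d yL s j)).trans (uequiv (betaF hL a b c d yL s j))

theorem gvog_apply (s : Fin n → ℂ) (j : Fin (n + 1)) (m : F j) (w : L j) :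
    gvog hL a b c d yL s j (m, w)
      = (m + betaF hL a b c d yL s j (gammaF hL a b c d yL s j m + w),
         gammaF hL a b c d yL s j m + w) := rfl

variable (hac : IsConormal xF a)
  (hbx : ∀ i : Fin n, xF i ∘ₗ b i = 0)
  (hcx : ∀ i : Fin n, c i ∘ₗ xF i = 0)

include hac hbx hcx in
/-- The gauge transformation fixes `ε(x_F, 0)`. -/
theorem gauge_fixes_X (s : Fin n → ℂ) :
    Vact (gvog hL a b c d yL s) (eps (xF, (0 : Vog n L))) = eps (xF, (0 : Vog n L)) := by
  apply Vact_eq_of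
  rintro i ⟨f, l⟩
  have he : (eps (xF, (0 : Vog n L)) i) ((f, l) : F i.castSucc × L i.castSucc)
      = (xF i f, 0) := by simp [eps]
  rw [he, gvog_apply]
  have h1 : gammaF hL a b c d yL s i.succ (xF i f) = 0 :=
    gammaF_vanish hL xF a b c d yL hac hbx hcx s i f
  rw [h1, zero_add, map_zero, add_zero]
  have h2 : gvog hL a b c d yL s i.castSucc (f, l)
      = (f + betaF hL a b c d yL s i.castSucc (gammaF hL a b c d yL s i.castSucc f + l),
         gammaF hL a b c d yL s i.castSucc f + l) := gvog_apply _ _ _ _ _ _ _ _ _ _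
  rw [h2]
  have h3 : (eps (xF, (0 : Vog n L)) i)
      ((f + betaF hL a b c d yL s i.castSucc (gammaF hL a b c d yL s i.castSucc f + l),
        gammaF hL a b c d yL s i.castSucc f + l) : F i.castSucc × L i.castSucc)
      = (xF i (f + betaF hL a b c d yL s i.castSucc
          (gammaF hL a b c d yL s i.castSucc f + l)), 0) := by simp [eps]
  rw [h3, map_add]
  have h4 : xF i (betaF hL a b c d yL s i.castSucc
      (gammaF hL a b c d yL s i.castSucc f + l)) = 0 :=
    betaF_vanish hL xF a b c d yL hac hbx hcx s i _
  rw [h4, add_zero]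

include hac hbx hcx in
/-- The modified `a`-block is still conormal to `x_F`. -/
theorem astarF_conormal (s : Fin n → ℂ) : IsConormal xF (astarF hL a b c d yL s) := by
  have h1 : ∀ i : Fin n, xF i ∘ₗ astarF hL a b c d yL s i = xF i ∘ₗ a i := by
    intro i
    apply LinearMap.ext
    intro v
    simp only [LinearMap.comp_apply, astarF, LinearMap.sub_apply, map_sub]
    have := betaF_vanish hL xF a b c d yL hac hbx hcx s i (c i v)
    rw [this, sub_zero]
  have h2 : ∀ i : Fin n, astarF hL a b c d yL s i ∘ₗ xF i = a i ∘ₗ xF i := by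
    intro i
    apply LinearMap.ext
    intro v
    simp only [LinearMap.comp_apply, astarF, LinearMap.sub_apply]
    have hcv : c i (xF i v) = 0 := by simpa using LinearMap.congr_fun (hcx i) v
    rw [hcv, map_zero, sub_zero]
  intro j
  have hLeq : Fin.cases (motive := fun j => F j →ₗ[ℂ] F j) 0
      (fun i => xF i ∘ₗ astarF hL a b c d yL s i) j
      = Fin.cases (motive := fun j => F j →ₗ[ℂ] F j) 0 (fun i => xF i ∘ₗ a i) j := by
    induction j using Fin.cases with
    | zero => rfl
    | succ i => rw [Fin.cases_succ, Fin.cases_succ, h1]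
  have hReq : Fin.lastCases (motive := fun j => F j →ₗ[ℂ] F j) 0
      (fun i => astarF hL a b c d yL s i ∘ₗ xF i) j
      = Fin.lastCases (motive := fun j => F j →ₗ[ℂ] F j) 0 (fun i => a i ∘ₗ xF i) j := by
    induction j using Fin.lastCases with
    | last => simp
    | cast i => rw [Fin.lastCases_castSucc, Fin.lastCases_castSucc, h2]
  rw [hLeq, hReq, hac j]

include hac hbx hcx in
/-- The gauge transformation carries the block-diagonal data to the target. -/
theorem gauge_moves_Y (s : Fin n → ℂ) (hGood : ∀ i, DeltaF hL a b c d yL s i ≠ 0) :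
    VactD (gvog hL a b c d yL s)
        (epsD (astarF hL a b c d yL s, fun i => DeltaF hL a b c d yL s i))
      = mk4 a b c (fun i => d i + s i • yL i) := by
  apply VactD_eq_of
  rintro i ⟨f, l⟩
  set βc := betaF hL a b c d yL s i.castSucc with hβc
  set βs := betaF hL a b c d yL s i.succ with hβs
  set γc := gammaF hL a b c d yL s i.castSucc with hγc
  set γs := gammaF hL a b c d yL s i.succ with hγs
  set Δ := DeltaF hL a b c d yL s i with hΔdef
  set ast := astarF hL a b c d yL s i with hast
  have he : (epsD (astarF hL a b c d yL s, fun i => DeltaF hL a b c d yL s i) i)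
      ((f, l) : F i.succ × L i.succ) = (ast f, Δ l) := by simp [epsD, hast, hΔdef]
  rw [he, gvog_apply]
  have hg : gvog hL a b c d yL s i.succ (f, l) = (f + βs (γs f + l), γs f + l) :=
    gvog_apply _ _ _ _ _ _ _ _ _ _
  rw [hg, mk4_apply]
  have hpβ : ∀ l' : L i.succ, βc (Δ l') = b i l' + a i (βs l') :=
    fun l' => betaF_spec hL a b c d yL s i (hGood i) l'
  have hpγ : ∀ f' : F i.succ, Δ (γs f') = γc (ast f') - c i f' :=
    fun f' => gammaF_spec hL a b c d yL s i (hGood i) f'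
  have hpΔ : ∀ l' : L i.succ, Δ l' = (d i l' + s i • yL i l') + c i (βs l') := by
    intro l'
    rw [hΔdef]
    simp only [DeltaF, LinearMap.add_apply, LinearMap.smul_apply, LinearMap.comp_apply, hβs]
  have hastf : ast f = a i f - βc (c i f) := by
    rw [hast]; simp [astarF, hβc]
  refine Prod.ext ?_ ?_
  · show ast f + βc (γc (ast f) + Δ l) = a i (f + βs (γs f + l)) + b i (γs f + l)
    have e3 : γc (ast f) = Δ (γs f) + c i f := by rw [hpγ f]; abel
    rw [map_add, e3, map_add, hpβ, hpβ, hastf]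
    simp only [map_add]
    abel
  · show γc (ast f) + Δ l = c i (f + βs (γs f + l)) + ((fun i => d i + s i • yL i) i) (γs f + l)
    have e3 : γc (ast f) = Δ (γs f) + c i f := by rw [hpγ f]; abel
    rw [e3, hpΔ (γs f), hpΔ l]
    simp only [map_add, LinearMap.add_apply, LinearMap.smul_apply, smul_add]
    abel

end Dir2Gauge
section Dir2Main

variable {F L : Fin (n + 1) → Type}
  [∀ i, AddCommGroup (F i)] [∀ i, Module ℂ (F i)] [∀ i, FiniteDimensional ℂ (F i)]
  [∀ i, AddCommGroup (L i)] [∀ i, Module ℂ (L i)] [∀ i, FiniteDimensional ℂ (L i)]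
  (hL : ∀ i, Module.finrank ℂ (L i) = 1)
  (CF : Set (Vog n F)) (hCF : IsOrbit CF)
  (BF : Set (VogD n F)) (hBF : IsOrbitD BF)
  (hdual : Zcl (Lam CF) = Zcl (LamD BF))
  (xF : Vog n F) (hxF : xF ∈ CF) (yF' : VogD n F) (hyF' : yF' ∈ BF)
  (yL : VogD n L) (hyL : ∀ i, yL i ≠ 0)
  (a : VogD n F)
  (b : ∀ i : Fin n, L i.succ →ₗ[ℂ] F i.castSucc)
  (c : ∀ i : Fin n, F i.succ →ₗ[ℂ] L i.castSucc)
  (d : VogD n L)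
  (hac : IsConormal xF a)
  (hbx : ∀ i : Fin n, xF i ∘ₗ b i = 0)
  (hcx : ∀ i : Fin n, c i ∘ₗ xF i = 0)

include hL hBF hdual hxF hyF' hyL hac hbx hcx in
theorem dir2base (s : Fin n → ℂ) (hGood : ∀ i, DeltaF hL a b c d yL s i ≠ 0) :
    ((eps (xF, (0 : Vog n L)), mk4 a b c (fun i => d i + s i • yL i)) :
        Vog n (fun i => F i × L i) × VogD n (fun i => F i × L i))
      ∈ Zcl (LamD {y : VogD n (fun i => F i × L i) |
          ∃ h : ∀ i, (F i × L i) ≃ₗ[ℂ] (F i × L i), y = VactD h (epsD (yF', yL))}) := by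
  set Bset := {y : VogD n (fun i => F i × L i) |
    ∃ h : ∀ i, (F i × L i) ≃ₗ[ℂ] (F i × L i), y = VactD h (epsD (yF', yL))} with hBset
  set g := gvog hL a b c d yL s with hg
  set Δf : VogD n L := fun i => DeltaF hL a b c d yL s i with hΔf
  -- the evaluation point
  have hmemF : ((xF, astarF hL a b c d yL s) : Vog n F × VogD n F) ∈ Zcl (LamD BF) := by
    rw [← hdual]
    exact subset_Zcl _ ⟨hxF, astarF_conormal hL xF a b c d yL hac hbx hcx s⟩
  -- affine structure of the map
  have haff : ∃ (T0 : (Vog n F × VogD n F) →ₗ[ℂ]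
      (Vog n (fun i => F i × L i) × VogD n (fun i => F i × L i))) (c0 : _),
      ∀ m : Vog n F × VogD n F,
        ((Vact g (eps (m.1, (0 : Vog n L))), VactD g (epsD (m.2, Δf))) :
          Vog n (fun i => F i × L i) × VogD n (fun i => F i × L i)) = T0 m + c0 := by
    refine ⟨{ toFun := fun m => (Vact g (eps (m.1, (0 : Vog n L))),
                VactD g (epsD (m.2, (0 : VogD n L))))
              map_add' := ?_
              map_smul' := ?_ }, ((0 : Vog n (fun i => F i × L i)),
                VactD g (epsD ((0 : VogD n F), Δf))), fun m => ?_⟩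
    · rintro ⟨u, w⟩ ⟨u', w'⟩
      refine Prod.ext ?_ ?_
      · show Vact g (eps ((u + u' : Vog n F), (0 : Vog n L))) = _
        rw [eps_add0, Vact_add]; rfl
      · show VactD g (epsD ((w + w' : VogD n F), (0 : VogD n L))) = _
        rw [epsD_add0, VactD_add]; rfl
    · rintro t ⟨u, w⟩
      refine Prod.ext ?_ ?_
      · show Vact g (eps ((t • u : Vog n F), (0 : Vog n L))) = _
        rw [eps_smul0, Vact_smul]; rfl
      · show VactD g (epsD ((t • w : VogD n F), (0 : VogD n L))) = _
        rw [epsD_smul0, VactD_smul]; rfl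
    · refine Prod.ext ?_ ?_
      · show Vact g (eps (m.1, (0 : Vog n L))) = Vact g (eps (m.1, (0 : Vog n L))) + 0
        rw [add_zero]
      · show VactD g (epsD (m.2, Δf))
          = VactD g (epsD (m.2, (0 : VogD n L))) + VactD g (epsD ((0 : VogD n F), Δf))
        rw [← VactD_add, ← epsD_split]
  obtain ⟨T0, c0, hT0⟩ := haff
  -- the map sends `Λ'_{B_F}` into `Λ'_B`
  have hmap : ∀ m ∈ LamD BF,
      ((Vact g (eps (m.1, (0 : Vog n L))), VactD g (epsD (m.2, Δf))) :
        Vog n (fun i => F i × L i) × VogD n (fun i => F i × L i)) ∈ Zcl (LamD Bset) := by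
    rintro ⟨u, w⟩ ⟨hw, hcuw⟩
    apply subset_Zcl
    constructor
    · obtain ⟨hLam, hδeq⟩ := chain_orbit hL yL hyL Δf (fun i => hGood i)
      obtain ⟨hFw, hweq⟩ := orbitD_mem_iff hBF hyF' w hw
      have : epsD (w, Δf) = VactD (prodTup hFw hLam) (epsD (yF', yL)) := by
        rw [VactD_prodTup, ← hweq, ← hδeq]
      show VactD g (epsD (w, Δf)) ∈ Bset
      rw [this, VactD_VactD]
      exact ⟨_, rfl⟩
    · exact (IsConormal.prodMk hcuw (isConormal_zero_left Δf)).conj g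
  have hstep := Zcl_map _ T0 c0 hT0 hmap _ hmemF
  have heval : ((Vact g (eps (xF, (0 : Vog n L))), VactD g (epsD (astarF hL a b c d yL s, Δf))) :
      Vog n (fun i => F i × L i) × VogD n (fun i => F i × L i))
      = (eps (xF, (0 : Vog n L)), mk4 a b c (fun i => d i + s i • yL i)) := by
    rw [hg, hΔf]
    rw [gauge_fixes_X hL xF a b c d yL hac hbx hcx s,
      gauge_moves_Y hL xF a b c d yL hac hbx hcx s hGood]
  rw [← heval]
  exact hstep

include hL hBF hdual hxF hyF' hyL hac hbx hcx in
theorem dir2ind : ∀ k : ℕ, ∀ s : Fin n → ℂ,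
    (∀ j : Fin n, (j : ℕ) < k → s j = 0) →
    (∀ j : Fin n, k ≤ (j : ℕ) → DeltaF hL a b c d yL s j ≠ 0) →
    ((eps (xF, (0 : Vog n L)), mk4 a b c (fun i => d i + s i • yL i)) :
        Vog n (fun i => F i × L i) × VogD n (fun i => F i × L i))
      ∈ Zcl (LamD {y : VogD n (fun i => F i × L i) |
          ∃ h : ∀ i, (F i × L i) ≃ₗ[ℂ] (F i × L i), y = VactD h (epsD (yF', yL))}) := by
  intro k
  induction k with
  | zero =>
    intro s _ hΔ
    exact dir2base hL CF BF hBF hdual xF hxF yF' hyF' yL hyL a b c d hac hbx hcx s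
      (fun i => hΔ i (Nat.zero_le _))
  | succ k ih =>
    intro s hz hΔ
    by_cases hkn : k < n
    · set kf : Fin n := ⟨k, hkn⟩ with hkf
      set Sbad := {σ : ℂ | DeltaF hL a b c d yL (Function.update s kf σ) kf = 0} with hSbad
      have hsub : Sbad.Subsingleton := by
        intro σ1 h1 σ2 h2
        rw [hSbad, Set.mem_setOf_eq, DeltaF_pencil] at h1 h2
        have hzero : (σ1 - σ2) • yL kf = 0 := by
          have := h1.trans h2.symm
          rw [sub_smul]
          have h3 : σ1 • yL kf = σ2 • yL kf := by
            have := congrArg (fun T => T - DeltaF hL a b c d yL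
              (Function.update s kf 0) kf) this
            simpa [add_sub_cancel_left] using this
          rw [h3, sub_self]
        rcases smul_eq_zero.mp hzero with h | h
        · exact sub_eq_zero.mp h
        · exact absurd h (hyL kf)
      have hSgood : {σ : ℂ | DeltaF hL a b c d yL (Function.update s kf σ) kf ≠ 0}.Infinite := by
        have : {σ : ℂ | DeltaF hL a b c d yL (Function.update s kf σ) kf ≠ 0} = Sbadᶜ := by
          rw [hSbad]; ext σ; simp
        rw [this]
        exact Set.Finite.infinite_compl hsub.finite
      -- membership along the pencil
      have hmem : ∀ σ ∈ {σ : ℂ | DeltaF hL a b c d yL (Function.update s kf σ) kf ≠ 0},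
          ((eps (xF, (0 : Vog n L)),
            mk4 a b c (fun i => d i + (Function.update s kf σ) i • yL i)) :
            Vog n (fun i => F i × L i) × VogD n (fun i => F i × L i))
          ∈ Zcl (LamD {y : VogD n (fun i => F i × L i) |
              ∃ h : ∀ i, (F i × L i) ≃ₗ[ℂ] (F i × L i), y = VactD h (epsD (yF', yL))}) := by
        intro σ hσ
        apply ih (Function.update s kf σ)
        · intro j hj
          have hne : j ≠ kf := by
            intro h; rw [h] at hj; exact absurd hj (show ¬ (k:ℕ) < k from lt_irrefl k)
          rw [Function.update_of_ne hne]
          exact hz j (by omega)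
        · intro j hj
          by_cases hjk : (j : ℕ) = k
          · have : j = kf := Fin.ext (by simp [hkf, hjk])
            rw [this]
            exact hσ
          · have hgt : (kf : ℕ) < (j : ℕ) := by simp [hkf]; omega
            rw [DeltaF_update_gt hL a b c d yL s kf σ j hgt]
            exact hΔ j (by omega)
      -- the affine curve in σ
      set dir : VogD n L := Function.update (0 : VogD n L) kf (yL kf) with hdir
      set m0 := ((eps (xF, (0 : Vog n L)), mk4 a b c (fun i => d i + s i • yL i)) :
        Vog n (fun i => F i × L i) × VogD n (fun i => F i × L i)) with hm0
      set v0 := (((0 : Vog n (fun i => F i × L i)), mk4 0 0 0 dir) :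
        Vog n (fun i => F i × L i) × VogD n (fun i => F i × L i)) with hv0
      have hcurve : ∀ σ : ℂ,
          ((eps (xF, (0 : Vog n L)),
            mk4 a b c (fun i => d i + (Function.update s kf σ) i • yL i)) :
            Vog n (fun i => F i × L i) × VogD n (fun i => F i × L i)) = m0 + σ • v0 := by
        intro σ
        have hdarg : (fun i => d i + (Function.update s kf σ) i • yL i)
            = fun i => (d i + s i • yL i) + σ • dir i := by
          funext i
          by_cases hik : i = kf
          · subst hik
            have hsk : s kf = 0 := hz kf (by show k < k + 1; omega)
            rw [Function.update_self, hdir, Function.update_self, hsk, zero_smul, add_zero]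
          · rw [Function.update_of_ne hik, hdir, Function.update_of_ne hik]
            simp
        rw [hdarg, mk4_d_add, hm0, hv0]
        refine Prod.ext ?_ ?_
        · show eps (xF, (0 : Vog n L)) = eps (xF, (0 : Vog n L)) + σ • 0
          rw [smul_zero, add_zero]
        · rfl
      apply Zcl_curve m0 v0 hSgood
      intro σ hσ
      rw [← hcurve σ]
      exact hmem σ hσ
    · apply ih s
      · intro j _
        exact hz j (by omega)
      · intro j hj
        exact absurd (lt_of_le_of_lt hj j.isLt) (by omega)

end Dir2Main
section Assembly

variable {F L : Fin (n + 1) → Type}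
  [∀ i, AddCommGroup (F i)] [∀ i, Module ℂ (F i)] [∀ i, FiniteDimensional ℂ (F i)]
  [∀ i, AddCommGroup (L i)] [∀ i, Module ℂ (L i)] [∀ i, FiniteDimensional ℂ (L i)]
  (hL : ∀ i, Module.finrank ℂ (L i) = 1)
  (CF : Set (Vog n F)) (hCF : IsOrbit CF)
  (BF : Set (VogD n F)) (hBF : IsOrbitD BF)
  (hdual : Zcl (Lam CF) = Zcl (LamD BF))
  (xF : Vog n F) (hxF : xF ∈ CF) (yF' : VogD n F) (hyF' : yF' ∈ BF)
  (yL : VogD n L) (hyL : ∀ i, yL i ≠ 0)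

include hL hBF hdual hxF hyF' hyL in
theorem dir2 :
    Lam {x : Vog n (fun i => F i × L i) |
        ∃ h : ∀ i, (F i × L i) ≃ₗ[ℂ] (F i × L i), x = Vact h (eps (xF, (0 : Vog n L)))}
      ⊆ Zcl (LamD {y : VogD n (fun i => F i × L i) |
          ∃ h : ∀ i, (F i × L i) ≃ₗ[ℂ] (F i × L i), y = VactD h (epsD (yF', yL))}) := by
  rintro ⟨x, y⟩ ⟨hx, hcon⟩
  obtain ⟨h, rfl⟩ := hx
  set y' := VactD (fun i => (h i).symm) y with hy'
  have hyy' : y = VactD h y' := by rw [hy', VactD_symm_cancel]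
  have hcon' : IsConormal (E := fun i => F i × L i) (eps (xF, (0 : Vog n L))) y' := by
    have h2 : IsConormal (Vact h (eps (xF, (0 : Vog n L)))) (VactD h y') := by
      rw [← hyy']; exact hcon
    exact (isConormal_conj_iff h).mp h2
  obtain ⟨hac', hbx', hcx'⟩ := conormal_to_diagX xF y' hcon'
  have hmem := dir2ind hL CF BF hBF hdual xF hxF yF' hyF' yL hyL
    (blkA y') (blkB y') (blkC y') (blkD y') hac' hbx' hcx' n (fun _ => 0)
    (fun _ _ => rfl) (fun j hj => absurd (lt_of_le_of_lt hj j.isLt) (lt_irrefl n))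
  have hd : (fun i => blkD y' i + (fun _ => (0:ℂ)) i • yL i) = blkD y' := by
    funext i; rw [zero_smul, add_zero]
  rw [hd, mk4_blocks] at hmem
  have hfinal := Zcl_LamD_stable (B := {y : VogD n (fun i => F i × L i) |
    ∃ h : ∀ i, (F i × L i) ≃ₗ[ℂ] (F i × L i), y = VactD h (epsD (yF', yL))})
    ⟨epsD (yF', yL), rfl⟩ h hmem
  simpa [← hyy'] using hfinal

end Assembly
/-- With `E_i = F_i ⊕ L_i`, `dim L_i = 1`: if `B_F` is the dual orbit of
`C_F` (i.e. `Zcl(Λ_{C_F}) = Zcl(Λ'_{B_F})` inside `V_F × V_F*`), `x_F ∈ C_F`,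
`y'_F ∈ B_F`, and `y_L ∈ V_L*` has all components nonzero, then the `H`-orbit `B` of
`ᵗε(y'_F, y_L)` is the dual orbit of the `H`-orbit `C` of `ε(x_F, 0)`:
`Zcl(Λ_C) = Zcl(Λ'_B)` inside `V × V*`. -/
theorem stmt_10 (n : ℕ) (F L : Fin (n + 1) → Type)
    [∀ i, AddCommGroup (F i)] [∀ i, Module ℂ (F i)] [∀ i, FiniteDimensional ℂ (F i)]
    [∀ i, AddCommGroup (L i)] [∀ i, Module ℂ (L i)] [∀ i, FiniteDimensional ℂ (L i)]
    (hL : ∀ i, Module.finrank ℂ (L i) = 1)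
    (CF : Set (Vog n F)) (hCF : IsOrbit CF)
    (BF : Set (VogD n F)) (hBF : IsOrbitD BF)
    (hdual : Zcl (Lam CF) = Zcl (LamD BF))
    (xF : Vog n F) (hxF : xF ∈ CF) (yF' : VogD n F) (hyF' : yF' ∈ BF)
    (yL : VogD n L) (hyL : ∀ i, yL i ≠ 0) :
    Zcl (Lam {x : Vog n (fun i => F i × L i) |
        ∃ h : ∀ i, (F i × L i) ≃ₗ[ℂ] (F i × L i), x = Vact h (eps (xF, (0 : Vog n L)))})
      = Zcl (LamD {y : VogD n (fun i => F i × L i) |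
          ∃ h : ∀ i, (F i × L i) ≃ₗ[ℂ] (F i × L i), y = VactD h (epsD (yF', yL))}) := by
  apply Set.Subset.antisymm
  · exact Zcl_min (dir2 hL CF BF hBF hdual xF hxF yF' hyF' yL hyL)
  · exact Zcl_min (dir1 hL CF hCF BF hBF hdual xF hxF yF' hyF' yL hyL)
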